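/- arXiv:1012.3541 — 6 statements merged into one kernel-verified Lean document; each statement's English description precedes it below -/
import Mathlib

section
/- Let P be a simple closed polygon in ℝ², and suppose f : ℝ² \ P → {0,1} is a locally constant function. If for every point x ∈ P and every ε > 0 the ball B(x,ε) contains points where f = 0 and points where f = 1, then the sets f⁻¹(0) and f⁻¹(1) are nonempty, open, disjoint, their union is ℝ² \ P, and the boundary of each equals P. -/
open Set Metric

abbrev Plane := EuclideanSpace ℝ (Fin 2)

/-- The `i`-th edge of the closed polygon with vertex cycle `p`. -/
def polyEdge {n : ℕ} (p : ZMod n → Plane) (i : ZMod n) : Set Plane :=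
  segment ℝ (p i) (p (i + 1))

/-- The union of the edges of the closed polygon with vertex cycle `p`. -/
def polyBody {n : ℕ} (p : ZMod n → Plane) : Set Plane :=
  ⋃ i, polyEdge p i

/-- `p` is the vertex cycle of a simple closed `n`-gon: distinct vertices,
consecutive edges meet exactly in their common endpoint, non-consecutive edges
are disjoint. -/
structure IsSimplePolygon {n : ℕ} (p : ZMod n → Plane) : Prop where
  three_le : 3 ≤ n
  inj : Function.Injective p
  consec : ∀ i : ZMod n, polyEdge p i ∩ polyEdge p (i + 1) = {p (i + 1)}
  nonconsec : ∀ i j : ZMod n, j ≠ i → j ≠ i + 1 → i ≠ j + 1 →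
    polyEdge p i ∩ polyEdge p j = ∅

/-- The union of the bounded connected components of the complement of `P`
(the Jordan interior of `P`). -/
def intP (P : Set Plane) : Set Plane :=
  {x | x ∉ P ∧ Bornology.IsBounded (connectedComponentIn Pᶜ x)}

/-- The union of the unbounded connected components of the complement of `P`
(the Jordan exterior of `P`). -/
def extP (P : Set Plane) : Set Plane :=
  {x | x ∉ P ∧ ¬ Bornology.IsBounded (connectedComponentIn Pᶜ x)}

/-- There is a polygonal path of `k` segments from `a` to `b` inside `S`. -/
def PolyPath (S : Set Plane) (a b : Plane) (k : ℕ) : Prop :=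
  ∃ x : Fin (k + 1) → Plane, x 0 = a ∧ x (Fin.last k) = b ∧
    ∀ i : Fin k, segment ℝ (x i.castSucc) (x i.succ) ⊆ S

/-- The minimal number of segments of a polygonal path from `a` to `b` in `S`. -/
noncomputable def polyDist (S : Set Plane) (a b : Plane) : ℕ :=
  sInf {k | PolyPath S a b k}
theorem stmt3 {n : ℕ} (p : ZMod n → Plane) (hP : IsSimplePolygon p)
    (f : Plane → ℕ)
    (hrange : ∀ x, x ∉ polyBody p → f x = 0 ∨ f x = 1)
    (hloc : ∀ x, x ∉ polyBody p → ∃ ε > 0, Metric.ball x ε ⊆ (polyBody p)ᶜ ∧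
      ∀ y ∈ Metric.ball x ε, f y = f x)
    (hbd : ∀ x ∈ polyBody p, ∀ ε > 0,
      (∃ y ∈ Metric.ball x ε, y ∉ polyBody p ∧ f y = 0) ∧
      (∃ y ∈ Metric.ball x ε, y ∉ polyBody p ∧ f y = 1)) :
    ({x | x ∉ polyBody p ∧ f x = 0}).Nonempty ∧
    ({x | x ∉ polyBody p ∧ f x = 1}).Nonempty ∧
    IsOpen {x | x ∉ polyBody p ∧ f x = 0} ∧
    IsOpen {x | x ∉ polyBody p ∧ f x = 1} ∧
    Disjoint {x | x ∉ polyBody p ∧ f x = 0} {x | x ∉ polyBody p ∧ f x = 1} ∧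
    {x | x ∉ polyBody p ∧ f x = 0} ∪ {x | x ∉ polyBody p ∧ f x = 1} = (polyBody p)ᶜ ∧
    frontier {x | x ∉ polyBody p ∧ f x = 0} = polyBody p ∧
    frontier {x | x ∉ polyBody p ∧ f x = 1} = polyBody p := by
  haveI : NeZero n := ⟨by have := hP.three_le; omega⟩
  set P := polyBody p with hPdef
  set S0 := {x | x ∉ P ∧ f x = 0} with hS0
  set S1 := {x | x ∉ P ∧ f x = 1} with hS1
  have hp0 : p 0 ∈ P := mem_iUnion.2 ⟨0, left_mem_segment ℝ _ _⟩
  -- openness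
  have hopen : ∀ c : ℕ, IsOpen {x | x ∉ P ∧ f x = c} := by
    intro c
    rw [Metric.isOpen_iff]
    rintro x ⟨hxP, hxc⟩
    obtain ⟨ε, hε, hball, hconst⟩ := hloc x hxP
    exact ⟨ε, hε, fun y hy => ⟨hball hy, (hconst y hy).trans hxc⟩⟩
  have hopen0 : IsOpen S0 := hopen 0
  have hopen1 : IsOpen S1 := hopen 1
  -- nonempty
  obtain ⟨hne0', hne1'⟩ := hbd (p 0) hp0 1 one_pos
  obtain ⟨y0, _, hy0P, hy0f⟩ := hne0'
  obtain ⟨y1, _, hy1P, hy1f⟩ := hne1'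
  have hne0 : S0.Nonempty := ⟨y0, hy0P, hy0f⟩
  have hne1 : S1.Nonempty := ⟨y1, hy1P, hy1f⟩
  -- disjoint
  have hdisj : Disjoint S0 S1 := by
    rw [Set.disjoint_left]
    rintro x ⟨_, h0⟩ ⟨_, h1⟩
    rw [h0] at h1; exact one_ne_zero h1.symm
  -- union
  have hunion : S0 ∪ S1 = Pᶜ := by
    ext x
    constructor
    · rintro (⟨hx, _⟩ | ⟨hx, _⟩) <;> exact hx
    · intro hx
      rcases hrange x hx with h | h
      · exact Or.inl ⟨hx, h⟩
      · exact Or.inr ⟨hx, h⟩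
  -- P ⊆ closure of each
  have hcl : ∀ c : ℕ, c = 0 ∨ c = 1 → P ⊆ closure {x | x ∉ P ∧ f x = c} := by
    intro c hc x hx
    rw [Metric.mem_closure_iff]
    intro ε hε
    obtain ⟨h0, h1⟩ := hbd x hx ε hε
    rcases hc with rfl | rfl
    · obtain ⟨y, hy, hyP, hyf⟩ := h0
      exact ⟨y, ⟨hyP, hyf⟩, by simpa [dist_comm] using hy⟩
    · obtain ⟨y, hy, hyP, hyf⟩ := h1
      exact ⟨y, ⟨hyP, hyf⟩, by simpa [dist_comm] using hy⟩
  -- frontiers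
  have hfr : ∀ (A B : Set Plane), IsOpen A → IsOpen B → Disjoint A B →
      A ∪ B = Pᶜ → P ⊆ closure A → frontier A = P := by
    intro A B hA hB hAB hU hPA
    ext x
    constructor
    · rintro ⟨hxc, hxni⟩
      rw [hA.interior_eq] at hxni
      by_contra hxP
      have hx' : x ∈ A ∪ B := by rw [hU]; exact hxP
      rcases hx' with h | h
      · exact hxni h
      · have : (B ∩ A).Nonempty := by
          rw [Metric.mem_closure_iff] at hxc
          obtain ⟨ε, hε, hball⟩ := Metric.isOpen_iff.1 hB x h
          obtain ⟨y, hyA, hyd⟩ := hxc ε hε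
          exact ⟨y, hball (by simpa [dist_comm] using hyd), hyA⟩
        exact (hAB.symm.inter_eq ▸ this).ne_empty rfl
    · intro hxP
      refine ⟨hPA hxP, ?_⟩
      rw [hA.interior_eq]
      intro hxA
      have : x ∈ A ∪ B := Or.inl hxA
      rw [hU] at this
      exact this hxP
  refine ⟨hne0, hne1, hopen0, hopen1, hdisj, hunion, ?_, ?_⟩
  · exact hfr S0 S1 hopen0 hopen1 hdisj hunion (hcl 0 (Or.inl rfl))
  · exact hfr S1 S0 hopen1 hopen0 hdisj.symm (Set.union_comm S0 S1 ▸ hunion)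
      (hcl 1 (Or.inr rfl))
end

section
/- Let P be a simple closed polygon in ℝ² and let a ∈ ℝ² \ P. Then a sees at least one edge of P, i.e., there exists an edge I of P and a point x in the relative interior of I such that the segment [a,x] meets P only at x. -/
open Set Metric

private lemma uIcc_inter_aux {u v w : ℝ} (huv : u ≠ v) (hvw : v ≠ w)
    (h : Set.uIcc u v ∩ Set.uIcc v w ⊆ {v}) : u < v ↔ v < w := by
  constructor
  · intro hu
    by_contra hw
    have hw' : w < v := (not_lt.1 hw).lt_of_ne hvw.symm
    set m := (max u w + v) / 2 with hm
    have h1 : max u w < v := max_lt hu hw'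
    have h2 : max u w < m := by rw [hm]; linarith
    have h3 : m < v := by rw [hm]; linarith
    have hmem : m ∈ Set.uIcc u v ∩ Set.uIcc v w := by
      constructor
      · exact Set.mem_uIcc.2 (Or.inl ⟨(le_max_left u w).trans h2.le, h3.le⟩)
      · exact Set.mem_uIcc.2 (Or.inr ⟨(le_max_right u w).trans h2.le, h3.le⟩)
    have := h hmem
    simp only [Set.mem_singleton_iff] at this
    linarith [this ▸ h3]
  · intro hw
    by_contra hu
    have hu' : v < u := (not_lt.1 hu).lt_of_ne huv.symm
    set m := (min u w + v) / 2 with hm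
    have h1 : v < min u w := lt_min hu' hw
    have h2 : m < min u w := by rw [hm]; linarith
    have h3 : v < m := by rw [hm]; linarith
    have hmem : m ∈ Set.uIcc u v ∩ Set.uIcc v w := by
      constructor
      · exact Set.mem_uIcc.2 (Or.inr ⟨h3.le, h2.le.trans (min_le_left u w)⟩)
      · exact Set.mem_uIcc.2 (Or.inl ⟨h3.le, h2.le.trans (min_le_right u w)⟩)
    have := h hmem
    simp only [Set.mem_singleton_iff] at this
    linarith [this ▸ h3]

private lemma exists_noncollinear {n : ℕ} (p : ZMod n → Plane) (hP : IsSimplePolygon p)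
    (a : Plane) (haP : ∀ j, a ≠ p j) :
    ∃ i, ¬ Collinear ℝ ({a, p i, p (i + 1)} : Set Plane) := by
  by_contra hcol
  push_neg at hcol
  have hn := hP.three_le
  haveI : NeZero n := ⟨by omega⟩
  haveI : Fact (1 < n) := ⟨by omega⟩
  have h10 : (1 : ZMod n) ≠ 0 := one_ne_zero
  have hconsec : ∀ j : ZMod n, j ≠ j + 1 := by
    intro j h
    exact h10 (left_eq_add.1 h)
  set v : Plane := p 0 - a with hv
  have hv0 : v ≠ 0 := sub_ne_zero.2 (haP 0).symm
  -- parametrize all vertices along the line through `a` and `p 0`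
  have key : ∀ m : ℕ, ∃ t : ℝ, p ((m : ℕ) : ZMod n) = t • v + a := by
    intro m
    induction m with
    | zero => exact ⟨1, by simp [hv]⟩
    | succ m ih =>
      obtain ⟨t, ht⟩ := ih
      have h1 := hcol ((m : ℕ) : ZMod n)
      have h2 : p (((m : ℕ) : ZMod n) + 1) ∈ line[ℝ, a, p ((m : ℕ) : ZMod n)] :=
        h1.mem_affineSpan_of_mem_of_ne (Set.mem_insert _ _)
          (by simp) (by simp) (haP _)
      have h2' : (p (((m : ℕ) : ZMod n) + 1) -ᵥ a) +ᵥ a ∈ line[ℝ, a, p ((m : ℕ) : ZMod n)] := by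
        simpa using h2
      obtain ⟨r, hr⟩ := vadd_left_mem_affineSpan_pair.1 h2'
      have hsub : p ((m : ℕ) : ZMod n) -ᵥ a = t • v := by
        rw [ht]; simp
      rw [hsub] at hr
      refine ⟨r * t, ?_⟩
      have hcast : (((m + 1 : ℕ)) : ZMod n) = ((m : ℕ) : ZMod n) + 1 := by push_cast; ring
      rw [hcast]
      have : p (((m : ℕ) : ZMod n) + 1) - a = (r * t) • v := by
        rw [← smul_smul]
        simpa using hr.symm
      have := sub_eq_iff_eq_add.1 this
      simpa using this
  have key' : ∀ j : ZMod n, ∃ t : ℝ, p j = t • v + a := by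
    intro j
    have := key j.val
    rwa [ZMod.natCast_rightInverse j] at this
  choose c hc using key'
  have hcne : ∀ j k : ZMod n, j ≠ k → c j ≠ c k := by
    intro j k hjk h
    exact hjk (hP.inj (by rw [hc j, hc k, h]))
  -- points of an edge
  have hedge : ∀ j : ZMod n, ∀ s : ℝ, s ∈ Set.uIcc (c j) (c (j + 1)) →
      s • v + a ∈ polyEdge p j := by
    intro j s hs
    rw [← segment_eq_uIcc] at hs
    obtain ⟨α, β, hα, hβ, hαβ, rfl⟩ := hs
    refine ⟨α, β, hα, hβ, hαβ, ?_⟩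
    rw [hc j, hc (j + 1), show (α : ℝ) = 1 - β by linarith]
    match_scalars <;> (simp only [smul_eq_mul]; ring)
  have hsub : ∀ j : ZMod n,
      Set.uIcc (c j) (c (j + 1)) ∩ Set.uIcc (c (j + 1)) (c (j + 1 + 1)) ⊆ {c (j + 1)} := by
    intro j s hs
    have h1 : s • v + a ∈ polyEdge p j ∩ polyEdge p (j + 1) :=
      ⟨hedge j s hs.1, hedge (j + 1) s hs.2⟩
    rw [hP.consec j] at h1
    simp only [Set.mem_singleton_iff] at h1
    rw [hc (j + 1)] at h1
    have h2 : (s - c (j + 1)) • v = 0 := by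
      rw [sub_smul, sub_eq_zero]
      exact add_right_cancel h1
    have h4 : s - c (j + 1) = 0 := by
      rcases smul_eq_zero.1 h2 with h3 | h3
      · exact h3
      · exact absurd h3 hv0
    have h5 : s = c (j + 1) := by linarith
    simp [h5]
  have hsign : ∀ j : ZMod n, (c j < c (j + 1) ↔ c (j + 1) < c (j + 1 + 1)) := by
    intro j
    exact uIcc_inter_aux (hcne _ _ (hconsec j)) (hcne _ _ (hconsec (j + 1))) (hsub j)
  have h01 : c 0 ≠ c (0 + 1) := hcne _ _ (hconsec 0)
  rcases h01.lt_or_gt with h01 | h01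
  · -- increasing case
    have hall : ∀ m : ℕ, c ((m : ℕ) : ZMod n) < c (((m : ℕ) : ZMod n) + 1) := by
      intro m
      induction m with
      | zero => simpa using h01
      | succ m ih =>
        have := (hsign _).1 ih
        have hcast : (((m + 1 : ℕ)) : ZMod n) = ((m : ℕ) : ZMod n) + 1 := by push_cast; ring
        rw [hcast]
        exact this
    have hg : StrictMono (fun m : ℕ => c ((m : ℕ) : ZMod n)) := by
      apply strictMono_nat_of_lt_succ
      intro m
      have hcast : (((m + 1 : ℕ)) : ZMod n) = ((m : ℕ) : ZMod n) + 1 := by push_cast; ring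
      simpa [hcast] using hall m
    have := hg (show 0 < n by omega)
    simp only [Nat.cast_zero, ZMod.natCast_self] at this
    exact lt_irrefl _ this
  · -- decreasing case
    have hall : ∀ m : ℕ, c (((m : ℕ) : ZMod n) + 1) < c ((m : ℕ) : ZMod n) := by
      intro m
      induction m with
      | zero => simpa using h01
      | succ m ih =>
        have hcast : (((m + 1 : ℕ)) : ZMod n) = ((m : ℕ) : ZMod n) + 1 := by push_cast; ring
        rw [hcast]
        by_contra h'
        have h2 : c (((m : ℕ) : ZMod n) + 1) < c (((m : ℕ) : ZMod n) + 1 + 1) :=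
          (not_lt.1 h').lt_of_ne (hcne _ _ (hconsec _))
        exact absurd ((hsign _).2 h2) (not_lt.2 ih.le)
    have hg : StrictAnti (fun m : ℕ => c ((m : ℕ) : ZMod n)) := by
      apply strictAnti_nat_of_succ_lt
      intro m
      have hcast : (((m + 1 : ℕ)) : ZMod n) = ((m : ℕ) : ZMod n) + 1 := by push_cast; ring
      simpa [hcast] using hall m
    have := hg (show 0 < n by omega)
    simp only [Nat.cast_zero, ZMod.natCast_self] at this
    exact lt_irrefl _ this

theorem stmt5 {n : ℕ} (p : ZMod n → Plane) (hP : IsSimplePolygon p)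
    (a : Plane) (ha : a ∉ polyBody p) :
    ∃ i : ZMod n, ∃ x ∈ openSegment ℝ (p i) (p (i + 1)),
      segment ℝ a x ∩ polyBody p = {x} := by
  have hn := hP.three_le
  haveI : NeZero n := ⟨by omega⟩
  haveI : Fact (1 < n) := ⟨by omega⟩
  have h10 : (1 : ZMod n) ≠ 0 := one_ne_zero
  have hconsec : ∀ j : ZMod n, j ≠ j + 1 := fun j h => h10 (left_eq_add.1 h)
  have hpmem : ∀ j : ZMod n, p j ∈ polyBody p := fun j =>
    Set.mem_iUnion.2 ⟨j, left_mem_segment ℝ _ _⟩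
  have haP : ∀ j, a ≠ p j := fun j h => ha (h ▸ hpmem j)
  have hvne : ∀ j : ZMod n, p j ≠ p (j + 1) := fun j h => hconsec j (hP.inj h)
  obtain ⟨i, hi⟩ := exists_noncollinear p hP a haP
  set E := openSegment ℝ (p i) (p (i + 1)) with hE
  have hvo : ∀ j : ZMod n, p j ∉ E := by
    intro j hj
    rcases eq_or_ne j i with rfl | hji
    · exact hvne j (left_mem_openSegment_iff.1 hj)
    rcases eq_or_ne j (i + 1) with rfl | hji1
    · exact hvne i (right_mem_openSegment_iff.1 hj)
    rcases eq_or_ne i (j + 1) with hij1 | hij1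
    · have hmm : p j ∈ polyEdge p j ∩ polyEdge p (j + 1) :=
        ⟨left_mem_segment ℝ _ _, by rw [← hij1]; exact openSegment_subset_segment ℝ _ _ hj⟩
      rw [hP.consec j] at hmm
      exact hvne j (by simpa using hmm)
    · have hmm : p j ∈ polyEdge p i ∩ polyEdge p j :=
        ⟨openSegment_subset_segment ℝ _ _ hj, left_mem_segment ℝ _ _⟩
      rw [hP.nonconsec i j hji hji1 hij1] at hmm
      exact hmm
  have hEinf : E.Infinite := by
    rw [hE, openSegment_eq_image_lineMap]
    exact (Set.Ioo_infinite zero_lt_one).image ((AffineMap.lineMap_injective ℝ (hvne i)).injOn)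
  have hmline : ∀ z : Plane, z ∈ E → z ∈ line[ℝ, p i, p (i + 1)] := by
    intro z hz
    rw [hE, openSegment_eq_image_lineMap] at hz
    obtain ⟨t, _, rfl⟩ := hz
    exact AffineMap.lineMap_mem_affineSpan_pair t _ _
  have hBsub : ∀ j : ZMod n,
      ({y ∈ E | Collinear ℝ ({a, p j, y} : Set Plane)}).Subsingleton := by
    intro j y₁ hy₁ y₂ hy₂
    by_contra hne12
    have l1 : y₁ ∈ line[ℝ, a, p j] :=
      hy₁.2.mem_affineSpan_of_mem_of_ne (Set.mem_insert _ _) (by simp) (by simp) (haP j)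
    have l2 : y₂ ∈ line[ℝ, a, p j] :=
      hy₂.2.mem_affineSpan_of_mem_of_ne (Set.mem_insert _ _) (by simp) (by simp) (haP j)
    have hc12 : Collinear ℝ ({y₁, y₂, a, p j} : Set Plane) :=
      collinear_insert_insert_of_mem_affineSpan_pair l1 l2
    have hay : a ∈ line[ℝ, y₁, y₂] :=
      hc12.mem_affineSpan_of_mem_of_ne (by simp) (by simp) (by simp) hne12
    have hcE : Collinear ℝ ({y₁, y₂, p i, p (i + 1)} : Set Plane) :=
      collinear_insert_insert_of_mem_affineSpan_pair (hmline y₁ hy₁.1) (hmline y₂ hy₂.1)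
    have hpi : p i ∈ line[ℝ, y₁, y₂] :=
      hcE.mem_affineSpan_of_mem_of_ne (by simp) (by simp) (by simp) hne12
    have hpi1 : p (i + 1) ∈ line[ℝ, y₁, y₂] :=
      hcE.mem_affineSpan_of_mem_of_ne (by simp) (by simp) (by simp) hne12
    have hfin : Collinear ℝ ({a, p i, p (i + 1), y₁, y₂} : Set Plane) :=
      collinear_insert_insert_insert_of_mem_affineSpan_pair hay hpi hpi1
    exact hi (hfin.subset (by intro z hz; simp only [Set.mem_insert_iff,
      Set.mem_singleton_iff] at hz ⊢; tauto))
  have hBfin : (⋃ j : ZMod n, {y ∈ E | Collinear ℝ ({a, p j, y} : Set Plane)}).Finite :=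
    Set.finite_iUnion fun j => (hBsub j).finite
  obtain ⟨y, hy⟩ := (hEinf.diff hBfin).nonempty
  have hyE : y ∈ E := hy.1
  have hyv : ∀ j : ZMod n, p j ∉ segment ℝ a y := by
    intro j hj
    rcases eq_or_ne (p j) y with h | h
    · exact hvo j (h ▸ hyE)
    · apply hy.2
      refine Set.mem_iUnion.2 ⟨j, hyE, ?_⟩
      have hjl : p j ∈ line[ℝ, a, y] := by
        rw [segment_eq_image_lineMap] at hj
        obtain ⟨t, _, ht⟩ := hj
        rw [← ht]
        exact AffineMap.lineMap_mem_affineSpan_pair t a y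
      exact (collinear_insert_of_mem_affineSpan_pair hjl).subset
        (by intro z hz; simp only [Set.mem_insert_iff, Set.mem_singleton_iff] at hz ⊢; tauto)
  have hyP : y ∈ polyBody p := Set.mem_iUnion.2 ⟨i, openSegment_subset_segment ℝ _ _ hyE⟩
  have hclosed : IsClosed (polyBody p) := by
    apply isClosed_iUnion_of_finite
    intro j
    rw [polyEdge, segment_eq_image]
    have hc : Continuous fun θ : ℝ => (1 - θ) • p j + θ • p (j + 1) := by fun_prop
    exact (isCompact_Icc.image hc).isClosed
  set f : ℝ → Plane := fun t => (1 - t) • a + t • y with hf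
  have hfc : Continuous f := by fun_prop
  set T : Set ℝ := Set.Icc (0 : ℝ) 1 ∩ f ⁻¹' polyBody p with hT
  have hT1 : (1 : ℝ) ∈ T := ⟨⟨zero_le_one, le_refl 1⟩, by simp [hf, hyP]⟩
  have hTc : IsClosed T := isClosed_Icc.inter (hclosed.preimage hfc)
  have hTbdd : BddBelow T := ⟨0, fun t ht => ht.1.1⟩
  set t0 := sInf T with ht0
  have ht0T : t0 ∈ T := hTc.csInf_mem ⟨1, hT1⟩ hTbdd
  set x := f t0 with hx
  have hxP : x ∈ polyBody p := ht0T.2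
  have hxseg : x ∈ segment ℝ a y := by
    rw [segment_eq_image]
    exact ⟨t0, ht0T.1, rfl⟩
  have hxv : ∀ k : ZMod n, x ≠ p k := fun k h => hyv k (h ▸ hxseg)
  obtain ⟨j, hxj⟩ := Set.mem_iUnion.1 hxP
  have hxo : x ∈ openSegment ℝ (p j) (p (j + 1)) :=
    mem_openSegment_of_ne_left_right (fun h => hxv j h.symm) (fun h => hxv (j + 1) h.symm) hxj
  refine ⟨j, x, hxo, ?_⟩
  apply Set.eq_singleton_iff_unique_mem.2
  refine ⟨⟨right_mem_segment ℝ a x, hxP⟩, ?_⟩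
  rintro z ⟨hz1, hz2⟩
  rw [segment_eq_image] at hz1
  obtain ⟨u, hu, rfl⟩ := hz1
  have hrepr : (1 - u) • a + u • x = f (u * t0) := by
    rw [hx, hf]
    module
  have hmem : u * t0 ∈ T := by
    refine ⟨⟨mul_nonneg hu.1 ht0T.1.1, ?_⟩, ?_⟩
    · calc u * t0 ≤ 1 * t0 := mul_le_mul_of_nonneg_right hu.2 ht0T.1.1
        _ = t0 := one_mul _
        _ ≤ 1 := ht0T.1.2
    · rw [Set.mem_preimage, ← hrepr]; exact hz2
  have hle : t0 ≤ u * t0 := csInf_le hTbdd hmem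
  have ht0pos : 0 < t0 := by
    rcases ht0T.1.1.lt_or_eq with h | h
    · exact h
    · exfalso
      apply ha
      have hf0 : f 0 = a := by simp [hf]
      rw [← hf0, h]
      exact ht0T.2
  have hu1 : u = 1 := by
    have h1u : 1 ≤ u := by nlinarith
    exact le_antisymm hu.2 h1u
  rw [hu1]
  simp
end

section
/- Let P be a simple closed n-gon in ℝ² with n ≥ 3, and let a ∈ ℝ² \ P. Then a sees at least two distinct vertices of P via ℝ² \ P; that is, there exist distinct vertices c', c'' of P with the open segments (a,c') and (a,c'') disjoint from P. -/
open Set Metric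

/-!
Choose a point `q` of `P` off every line through `a` and a vertex, and let `c` be the first point
of `P` on `[a, q]`. Then `c` is visible, lies inside an edge, and the two endpoints of that edge
are strictly on opposite sides of the line `ac`. For each endpoint `v`, some vertex in the closed
triangle `acv` is visible: if `v` is hidden, let `c'` be the first point of `P` on `[a, v]`. Its
edge has an endpoint strictly on the side of `c` of the line `av`, and the part of the edge on
that side can leave the triangle `acv` only through a vertex on `[c, v]`, since `[a, c)` is free
and edges meet only at vertices. This yields a vertex `w` in `acv` with `ac'w` inside `acv` but
missing `v`, so induction on the number of vertices in the triangle applies. The two triangles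
meet only on the line `ac`, which carries no vertex, so the two visible vertices are distinct.
-/

open AffineMap

theorem IsClosed.exists_mem_segment_openSegment_inter_eq_empty {E : Type*}
    [NormedAddCommGroup E] [NormedSpace ℝ E] {K : Set E} (hK : IsClosed K) {a b : E} (ha : a ∉ K)
    (h : (segment ℝ a b ∩ K).Nonempty) : ∃ c ∈ segment ℝ a b ∩ K, openSegment ℝ a c ∩ K = ∅ := by
  have hcpt : IsCompact (segment ℝ a b ∩ K) := by
    rw [segment_eq_image_lineMap]
    exact (isCompact_Icc.image lineMap_continuous).inter_right hK
  obtain ⟨c, hc, hmin⟩ := hcpt.exists_isMinOn h (continuous_const.dist continuous_id).continuousOn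
  refine ⟨c, hc, eq_empty_iff_forall_notMem.mpr fun z ⟨hz, hzK⟩ => ?_⟩
  have hac : a ≠ c := fun h => ha (h ▸ hc.2)
  have hzc : z ≠ c := fun h => hac ((right_mem_openSegment_iff).mp (h ▸ hz))
  have hzs : z ∈ segment ℝ a b :=
    (convex_segment a b).segment_subset (left_mem_segment ℝ a b) hc.1
      (openSegment_subset_segment ℝ a c hz)
  have hle : dist a c ≤ dist a z := hmin ⟨hzs, hzK⟩
  have hsum := dist_add_dist_of_mem_segment (openSegment_subset_segment ℝ a c hz)
  have : 0 < dist z c := dist_pos.mpr hzc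
  linarith

theorem exists_mem_Ioo_zero_one_nonneg_and_eq_zero {f₀ f₁ g₀ g₁ : ℝ} (hf : 0 < f₀) (hg : 0 < g₀)
    (h : f₁ < 0 ∨ g₁ < 0) : ∃ t ∈ Ioo (0 : ℝ) 1,
      0 ≤ (1 - t) * f₀ + t * f₁ ∧ 0 ≤ (1 - t) * g₀ + t * g₁ ∧
      ((1 - t) * f₀ + t * f₁ = 0 ∨ (1 - t) * g₀ + t * g₁ = 0) := by
  set F : ℝ → ℝ := fun t => min ((1 - t) * f₀ + t * f₁) ((1 - t) * g₀ + t * g₁)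
  have hF : ContinuousOn F (Icc 0 1) := by fun_prop
  have h0 : (0 : ℝ) ∈ Ioo (F 1) (F 0) := by
    simp only [F, sub_self, zero_mul, one_mul, zero_add, sub_zero, add_zero, mem_Ioo,
      lt_min_iff, min_lt_iff]
    exact ⟨h, hf, hg⟩
  obtain ⟨t, ht, hFt⟩ := intermediate_value_Ioo' zero_le_one hF h0
  refine ⟨t, ht, ?_, ?_, ?_⟩
  · exact hFt ▸ min_le_left _ _
  · exact hFt ▸ min_le_right _ _
  · rcases min_choice ((1 - t) * f₀ + t * f₁) ((1 - t) * g₀ + t * g₁) with h | h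
    · exact Or.inl (h ▸ hFt)
    · exact Or.inr (h ▸ hFt)

theorem exists_mem_Icc_zero_one_forall_ne_zero {ι : Type*} [Finite ι] (A B : ι → ℝ)
    (h : ∀ i, A i ≠ 0 ∨ B i ≠ 0) : ∃ t ∈ Icc (0 : ℝ) 1, ∀ i, (1 - t) * A i + t * B i ≠ 0 := by
  have hroots : ∀ i, {t : ℝ | (1 - t) * A i + t * B i = 0}.Subsingleton := by
    intro i s (hs : (1 - s) * A i + s * B i = 0) t (ht : (1 - t) * A i + t * B i = 0)
    by_contra hst
    have hAB : A i = B i := by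
      have : (s - t) * (B i - A i) = 0 := by linear_combination hs - ht
      linarith [(mul_eq_zero.mp this).resolve_left (sub_ne_zero.mpr hst)]
    have : A i = 0 := by rw [← hAB] at hs; linarith
    exact (h i).elim (· this) (· (hAB ▸ this))
  obtain ⟨t, ht, hbad⟩ := ((Icc_infinite (zero_lt_one' ℝ)).sdiff
    (finite_iUnion fun i => (hroots i).finite)).nonempty
  exact ⟨t, ht, fun i hi => hbad (mem_iUnion.mpr ⟨i, hi⟩)⟩

theorem lineMap_mem_segment_lineMap {E : Type*} [AddCommGroup E] [Module ℝ E] (x y : E)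
    {r₁ r₂ s : ℝ} (h : s ∈ uIcc r₁ r₂) :
    lineMap x y s ∈ segment ℝ (lineMap x y r₁ : E) (lineMap x y r₂) := by
  rw [← image_segment, segment_eq_uIcc]; exact mem_image_of_mem _ h

/-- Twice the signed area of the triangle `a b c`, positive when it is counterclockwise. -/
def orient (a b c : Plane) : ℝ := (b 0 - a 0) * (c 1 - a 1) - (b 1 - a 1) * (c 0 - a 0)

theorem Plane.ext_coord {x y : Plane} (h0 : x 0 = y 0) (h1 : x 1 = y 1) : x = y := by
  ext i; fin_cases i <;> assumption

section Orientation

variable (a b c x y z : Plane)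

@[simp] theorem orient_self_left : orient a a b = 0 := by simp [orient]
@[simp] theorem orient_self_right : orient a b b = 0 := by simp only [orient]; ring
@[simp] theorem orient_self_outer : orient a b a = 0 := by simp only [orient]; ring

theorem orient_rotate : orient b c a = orient a b c := by simp only [orient]; ring

theorem orient_swap : orient a c b = -orient a b c := by simp only [orient]; ring

theorem orient_lineMap (t : ℝ) :
    orient a b (lineMap x y t) = (1 - t) * orient a b x + t * orient a b y := by
  simp only [orient, lineMap_apply_module, PiLp.add_apply, PiLp.smul_apply, smul_eq_mul]; ring

theorem orient_lineMap_left (t : ℝ) :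
    orient (lineMap x y t) b c = (1 - t) * orient x b c + t * orient y b c := by
  simp only [orient, lineMap_apply_module, PiLp.add_apply, PiLp.smul_apply, smul_eq_mul]; ring

theorem orient_lineMap_mid (t : ℝ) :
    orient a (lineMap x y t) c = (1 - t) * orient a x c + t * orient a y c := by
  simp only [orient, lineMap_apply_module, PiLp.add_apply, PiLp.smul_apply, smul_eq_mul]; ring

theorem orient_add_orient_add_orient :
    orient z b c + orient a z c + orient a b z = orient a b c := by
  simp only [orient]; ring

theorem orient_smul_eq_add :
    orient a b c • z = orient z b c • a + orient a z c • b + orient a b z • c := by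
  apply Plane.ext_coord <;>
  · simp only [orient, PiLp.add_apply, PiLp.smul_apply, smul_eq_mul]; ring

variable {a b c x y z}

theorem convex_setOf_orient_mul_le (k r : ℝ) : Convex ℝ {z | orient a b z * k ≤ r} := by
  intro x (hx : orient a b x * k ≤ r) y (hy : orient a b y * k ≤ r) s t hs ht hst
  show orient a b (s • x + t • y) * k ≤ r
  have hcomb : orient a b (s • x + t • y) = s * orient a b x + t * orient a b y := by
    obtain rfl : s = 1 - t := by linarith
    rw [← lineMap_apply_module, orient_lineMap]
  have hr : r = s * r + t * r := by rw [← add_mul, hst, one_mul]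
  rw [hcomb]
  nlinarith [mul_le_mul_of_nonneg_left hx hs, mul_le_mul_of_nonneg_left hy ht]

theorem orient_mul_le_of_mem_convexHull {S : Set Plane} {k r : ℝ}
    (hS : ∀ w ∈ S, orient a b w * k ≤ r) (hz : z ∈ convexHull ℝ S) : orient a b z * k ≤ r :=
  convexHull_min hS (convex_setOf_orient_mul_le k r) hz

theorem orient_mul_nonneg_of_mem_convexHull (hz : z ∈ convexHull ℝ {a, b, c}) :
    0 ≤ orient a b z * orient a b c := by
  have := orient_mul_le_of_mem_convexHull (a := a) (b := b) (k := -orient a b c) (r := 0) ?_ hz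
  · linarith
  · simp only [mem_insert_iff, mem_singleton_iff, forall_eq_or_imp, forall_eq, orient_self_right,
      orient_self_outer, zero_mul, le_refl, true_and]
    nlinarith [mul_self_nonneg (orient a b c)]

theorem eq_barycentric (z : Plane) (hD : orient a b c ≠ 0) :
    z = (orient z b c / orient a b c) • a + (orient a z c / orient a b c) • b +
      (orient a b z / orient a b c) • c := by
  simp only [div_eq_inv_mul, mul_smul, ← smul_add, ← orient_smul_eq_add, inv_smul_smul₀ hD]

theorem mem_convexHull_of_orient (hD : orient a b c ≠ 0) (ha : 0 ≤ orient z b c * orient a b c)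
    (hb : 0 ≤ orient a z c * orient a b c) (hc : 0 ≤ orient a b z * orient a b c) :
    z ∈ convexHull ℝ {a, b, c} := by
  rw [eq_barycentric z hD]
  have hw := (convex_convexHull ℝ ({a, b, c} : Set Plane)).sum_mem (t := Finset.univ)
    (w := ![orient z b c / orient a b c, orient a z c / orient a b c, orient a b z / orient a b c])
    (z := ![a, b, c]) ?_ ?_ ?_
  · simpa [Fin.sum_univ_three, add_assoc] using hw
  · intro i _
    fin_cases i <;> exact div_nonneg_iff.mpr (mul_nonneg_iff.mp ‹_›)
  · simp only [Fin.sum_univ_three, Matrix.cons_val_zero, Matrix.cons_val_one, Matrix.cons_val_two,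
      Matrix.head_cons, Matrix.tail_cons]
    rw [← add_div, ← add_div, orient_add_orient_add_orient, div_self hD]
  · intro i _
    fin_cases i <;> exact subset_convexHull ℝ _ (by simp)

theorem mem_segment_of_orient (hD : orient a b c ≠ 0) (hz : orient a b z = 0)
    (ha : 0 ≤ orient z b c * orient a b c) (hb : 0 ≤ orient a z c * orient a b c) :
    z ∈ segment ℝ a b := by
  refine ⟨_, _, div_nonneg_iff.mpr (mul_nonneg_iff.mp ha),
    div_nonneg_iff.mpr (mul_nonneg_iff.mp hb), ?_, ?_⟩
  · rw [← add_div, div_eq_one_iff_eq hD, ← orient_add_orient_add_orient a b c z, hz, add_zero]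
  · conv_rhs => rw [eq_barycentric z hD, hz]
    simp

theorem orient_eq_zero_of_mem_segment {p q : Plane} (hx : x ∈ segment ℝ p q)
    (hy : y ∈ segment ℝ p q) (hz : z ∈ segment ℝ p q) : orient x y z = 0 := by
  rw [segment_eq_image_lineMap] at hx hy hz
  obtain ⟨r, -, rfl⟩ := hx
  obtain ⟨s, -, rfl⟩ := hy
  obtain ⟨t, -, rfl⟩ := hz
  simp only [orient, lineMap_apply_module, PiLp.add_apply, PiLp.smul_apply, smul_eq_mul]; ring

theorem exists_eq_lineMap_of_orient_eq_zero (hab : a ≠ b) (h : orient a b x = 0) :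
    ∃ t : ℝ, x = lineMap a b t := by
  have hcoord : b 0 - a 0 ≠ 0 ∨ b 1 - a 1 ≠ 0 := by
    by_contra! h'
    exact hab (Plane.ext_coord (by linarith [h'.1]) (by linarith [h'.2]))
  simp only [orient] at h
  rcases hcoord with h0 | h1
  · refine ⟨(x 0 - a 0) / (b 0 - a 0), Plane.ext_coord ?_ ?_⟩ <;>
      simp only [lineMap_apply_module, PiLp.add_apply, PiLp.smul_apply, smul_eq_mul] <;>
      field_simp
    · ring
    · linear_combination h
  · refine ⟨(x 1 - a 1) / (b 1 - a 1), Plane.ext_coord ?_ ?_⟩ <;>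
      simp only [lineMap_apply_module, PiLp.add_apply, PiLp.smul_apply, smul_eq_mul] <;>
      field_simp
    · linear_combination -h
    · ring

theorem orient_eq_zero_trans (hya : y ≠ a) (hxy : orient a x y = 0) (hyz : orient a y z = 0) :
    orient a x z = 0 := by
  obtain ⟨t, rfl⟩ :=
    exists_eq_lineMap_of_orient_eq_zero hya.symm (by rw [orient_swap, hxy, neg_zero])
  rw [orient_lineMap_mid, hyz]; simp

theorem orient_mul_neg_of_mem_openSegment (hc : c ∈ openSegment ℝ x y) (hb : orient a b c = 0)
    (hx : orient a b x ≠ 0) : orient a b x * orient a b y < 0 := by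
  rw [openSegment_eq_image_lineMap] at hc
  obtain ⟨t, ⟨ht0, ht1⟩, rfl⟩ := hc
  rw [orient_lineMap] at hb
  have hy : orient a b y = -((1 - t) / t) * orient a b x := by
    field_simp; linarith
  rw [hy]
  have : 0 < (1 - t) / t := div_pos (by linarith) ht0
  nlinarith [mul_self_pos.mpr hx]

theorem notMem_convexHull_lineMap {a v w : Plane} {s : ℝ} (hs₀ : 0 ≤ s) (hs₁ : s < 1)
    (hw : orient a w v ≠ 0) : v ∉ convexHull ℝ {a, lineMap a v s, w} := by
  intro hv
  have := orient_mul_le_of_mem_convexHull (a := a) (b := w) (k := orient a w v)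
    (r := s * (orient a w v * orient a w v)) ?_ hv
  · nlinarith [mul_self_pos.mpr hw]
  · simp only [mem_insert_iff, mem_singleton_iff, forall_eq_or_imp, forall_eq, orient_self_right,
      orient_self_outer, orient_lineMap]
    refine ⟨?_, ?_, ?_⟩ <;> nlinarith [mul_self_pos.mpr hw]

theorem nonempty_openSegment_inter_segment_of_orient_eq_zero {a v x y : Plane} {s : ℝ}
    (hav : a ≠ v) (hxy : x ≠ y) (hs : 0 < s) (hx : orient a v x = 0) (hy : orient a v y = 0)
    (h : lineMap a v s ∈ openSegment ℝ x y) :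
    (openSegment ℝ a (lineMap a v s) ∩ segment ℝ x y).Nonempty := by
  obtain ⟨tx, rfl⟩ := exists_eq_lineMap_of_orient_eq_zero hav hx
  obtain ⟨ty, rfl⟩ := exists_eq_lineMap_of_orient_eq_zero hav hy
  have htxy : tx ≠ ty := fun h => hxy (h ▸ rfl)
  rw [← image_openSegment, (lineMap_injective ℝ hav).mem_set_image, openSegment_eq_Ioo' htxy] at h
  set r := (max (min tx ty) 0 + s) / 2
  have hr0 : 0 < r := by have := le_max_right (min tx ty) 0; simp only [r]; linarith
  have hrs : r < s := by
    have : max (min tx ty) 0 < s := max_lt h.1 hs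
    simp only [r]; linarith
  refine ⟨lineMap a v r, ?_, lineMap_mem_segment_lineMap a v ?_⟩
  · have hseg : openSegment ℝ a (lineMap a v s) = lineMap a v '' openSegment ℝ 0 s := by
      rw [image_openSegment, lineMap_apply_zero]
    rw [hseg, openSegment_eq_Ioo hs]
    exact mem_image_of_mem _ ⟨hr0, hrs⟩
  · have := le_max_left (min tx ty) 0
    exact ⟨by simp only [r]; linarith [h.1], by linarith [h.2]⟩

end Orientation

section Polygon

variable {n : ℕ} {p : ZMod n → Plane}

theorem IsSimplePolygon.neZero (hP : IsSimplePolygon p) : NeZero n :=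
  ⟨by have := hP.three_le; omega⟩

theorem IsSimplePolygon.one_ne_zero (hP : IsSimplePolygon p) : (1 : ZMod n) ≠ 0 := by
  have : Fact (1 < n) := ⟨by have := hP.three_le; omega⟩
  exact _root_.one_ne_zero

theorem polyEdge_subset_polyBody (i : ZMod n) : polyEdge p i ⊆ polyBody p := subset_iUnion _ i

theorem vertex_mem_polyEdge (i : ZMod n) : p i ∈ polyEdge p i := left_mem_segment ℝ _ _

theorem vertex_succ_mem_polyEdge (i : ZMod n) : p (i + 1) ∈ polyEdge p i := right_mem_segment ℝ _ _

theorem vertex_mem_polyBody (i : ZMod n) : p i ∈ polyBody p :=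
  polyEdge_subset_polyBody i (vertex_mem_polyEdge i)

theorem IsSimplePolygon.isClosed_polyBody (hP : IsSimplePolygon p) : IsClosed (polyBody p) := by
  have := hP.neZero
  refine isClosed_iUnion_of_finite fun i => ?_
  rw [polyEdge, segment_eq_image_lineMap]
  exact (isCompact_Icc.image lineMap_continuous).isClosed

theorem IsSimplePolygon.polyEdge_inter_subset_range (hP : IsSimplePolygon p) {i j : ZMod n}
    (hij : i ≠ j) : polyEdge p i ∩ polyEdge p j ⊆ range p := by
  by_cases h₁ : j = i + 1
  · rw [h₁, hP.consec i]; simp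
  by_cases h₂ : i = j + 1
  · rw [h₂, inter_comm, hP.consec j]; simp
  rw [hP.nonconsec i j (Ne.symm hij) h₁ h₂]
  exact empty_subset _

theorem mem_openSegment_of_mem_polyEdge {i : ZMod n} {z : Plane} (hz : z ∈ polyEdge p i)
    (hzp : z ∉ range p) : z ∈ openSegment ℝ (p i) (p (i + 1)) :=
  mem_openSegment_of_ne_left_right (fun h => hzp ⟨i, h⟩) (fun h => hzp ⟨i + 1, h⟩) hz

theorem IsSimplePolygon.not_forall_eq_lineMap (hP : IsSimplePolygon p) {x y : Plane} (hxy : x ≠ y)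
    (t : ZMod n → ℝ) : ¬ ∀ j, p j = lineMap x y (t j) := by
  intro ht
  have := hP.neZero
  have htinj : Function.Injective t := fun j k h => hP.inj (by rw [ht j, ht k, h])
  obtain ⟨j, hj⟩ := Finite.exists_min t
  have hlt : ∀ k, k ≠ j → t j < t k := fun k hk =>
    lt_of_le_of_ne (hj k) fun h => hk (htinj h).symm
  have h₁ : t j < t (j - 1) := hlt _ fun h => hP.one_ne_zero (sub_eq_self.mp h)
  have h₂ : t j < t (j + 1) := hlt _ fun h => hP.one_ne_zero (add_eq_left.mp h)
  set s := min (t (j - 1)) (t (j + 1))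
  have hmem : lineMap x y s ∈ polyEdge p (j - 1) ∩ polyEdge p (j - 1 + 1) := by
    rw [sub_add_cancel, polyEdge, polyEdge, sub_add_cancel, ht, ht, ht]
    constructor <;> apply lineMap_mem_segment_lineMap <;> rw [mem_uIcc]
    · exact Or.inr ⟨(lt_min h₁ h₂).le, min_le_left _ _⟩
    · exact Or.inl ⟨(lt_min h₁ h₂).le, min_le_right _ _⟩
  rw [hP.consec, sub_add_cancel, mem_singleton_iff, ht] at hmem
  exact (lt_min h₁ h₂).ne' (lineMap_injective ℝ hxy hmem)

theorem IsSimplePolygon.exists_orient_ne_zero (hP : IsSimplePolygon p) {a : Plane}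
    (ha : a ∉ polyBody p) : ∃ j, orient a (p j) (p (j + 1)) ≠ 0 := by
  have := hP.neZero
  by_contra! h
  have hne : ∀ j, p j ≠ a := fun j hj => ha (hj ▸ vertex_mem_polyBody j)
  have hline : ∀ m : ℕ, orient a (p 0) (p m) = 0 := by
    intro m
    induction m with
    | zero => simp
    | succ m ih => rw [Nat.cast_succ]; exact orient_eq_zero_trans (hne _) ih (h _)
  choose t ht using fun j : ZMod n => exists_eq_lineMap_of_orient_eq_zero (hne 0).symm
    (by simpa only [ZMod.natCast_zmod_val] using hline j.val)
  exact hP.not_forall_eq_lineMap (hne 0).symm t ht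

theorem IsSimplePolygon.exists_mem_polyBody_forall_orient_ne_zero (hP : IsSimplePolygon p)
    {a : Plane} (ha : a ∉ polyBody p) : ∃ q ∈ polyBody p, ∀ k, orient a q (p k) ≠ 0 := by
  have := hP.neZero
  obtain ⟨j, hj⟩ := hP.exists_orient_ne_zero ha
  obtain ⟨t, ht, hne⟩ := exists_mem_Icc_zero_one_forall_ne_zero (fun k => orient a (p j) (p k))
    (fun k => orient a (p (j + 1)) (p k)) fun k => by
      by_contra! h
      refine hj (orient_eq_zero_trans (fun hk => ha (hk ▸ vertex_mem_polyBody k)) h.1 ?_)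
      rw [orient_swap, h.2, neg_zero]
  refine ⟨lineMap (p j) (p (j + 1)) t, polyEdge_subset_polyBody j (lineMap_mem_segment ℝ _ _ ht),
    fun k => ?_⟩
  rw [orient_lineMap_mid]
  exact hne k

end Polygon

section Visibility

variable {n : ℕ} {p : ZMod n → Plane} {a c v : Plane} {i j : ZMod n}

/-- The sign conditions put `z` in the triangle `acv`, and `h₀` on its side `[a, c]` or `[c, v]`. -/
theorem IsSimplePolygon.mem_range_of_orient_eq_zero (hP : IsSimplePolygon p) (ha : a ∉ polyBody p)
    (hci : c ∈ polyEdge p i) (hc : c ∉ range p) (hvi : v ∈ polyEdge p i)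
    (hac : openSegment ℝ a c ∩ polyBody p = ∅) (hD : orient a c v ≠ 0) (hji : j ≠ i) {z : Plane}
    (hzj : z ∈ polyEdge p j) (hza : 0 ≤ orient z c v * orient a c v)
    (hzc : 0 ≤ orient a z v * orient a c v) (hzv : 0 ≤ orient a c z * orient a c v)
    (h₀ : orient a c z = 0 ∨ orient z c v = 0) :
    z ∈ range p := by
  have hzP := polyEdge_subset_polyBody j hzj
  rcases h₀ with h₀ | h₀
  · have hz : z ∈ segment ℝ a c := mem_segment_of_orient hD h₀ hza hzc
    have hcz : c ≠ z := fun h => hc (hP.polyEdge_inter_subset_range hji ⟨h ▸ hzj, hci⟩)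
    have haz : a ≠ z := fun h => ha (h ▸ hzP)
    exact absurd hac
      (nonempty_iff_ne_empty.mp ⟨z, mem_openSegment_of_ne_left_right haz hcz hz, hzP⟩)
  · have hz : z ∈ segment ℝ c v := by
      refine mem_segment_of_orient (c := a) (by rwa [orient_rotate]) (by rwa [orient_rotate]) ?_ ?_
      · rwa [orient_rotate, orient_rotate a c v]
      · rwa [orient_rotate a c v, orient_rotate]
    exact hP.polyEdge_inter_subset_range hji ⟨hzj, (convex_segment _ _).segment_subset hci hvi hz⟩

theorem IsSimplePolygon.exists_vertex_mem_polyEdge_orient_pos (hP : IsSimplePolygon p)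
    (hD : orient a c v ≠ 0) {s : ℝ} (hs : 0 < s) (hj : lineMap a v s ∈ polyEdge p j)
    (hs' : lineMap a v s ∉ range p) (hvis : openSegment ℝ a (lineMap a v s) ∩ polyBody p = ∅) :
    ∃ k, p k ∈ polyEdge p j ∧ 0 < orient a (p k) v * orient a c v := by
  have hav : a ≠ v := by rintro rfl; simp at hD
  have hopen := mem_openSegment_of_mem_polyEdge hj hs'
  have hline : orient a v (lineMap a v s) = 0 := by rw [orient_lineMap]; simp
  have hnot : orient a v (p j) ≠ 0 ∨ orient a v (p (j + 1)) ≠ 0 := by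
    by_contra! h
    have hne : p j ≠ p (j + 1) := hP.inj.ne fun h => hP.one_ne_zero (left_eq_add.mp h)
    obtain ⟨z, hz, hzj⟩ :=
      nonempty_openSegment_inter_segment_of_orient_eq_zero hav hne hs h.1 h.2 hopen
    exact absurd hvis (nonempty_iff_ne_empty.mp ⟨z, hz, polyEdge_subset_polyBody j hzj⟩)
  have hneg : orient a v (p j) * orient a v (p (j + 1)) < 0 := by
    rcases hnot with h | h
    · exact orient_mul_neg_of_mem_openSegment hopen hline h
    · rw [mul_comm]
      exact orient_mul_neg_of_mem_openSegment (openSegment_symm ℝ (p j) (p (j + 1)) ▸ hopen) hline h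
  have hc : orient a v c ≠ 0 := by rwa [orient_swap, neg_ne_zero]
  have hside : ∀ w, orient a w v * orient a c v = orient a v w * orient a v c := fun w => by
    rw [orient_swap a w, orient_swap a c, neg_mul_neg]
  by_cases h : 0 < orient a v (p j) * orient a v c
  · exact ⟨j, vertex_mem_polyEdge j, hside _ ▸ h⟩
  · refine ⟨j + 1, vertex_succ_mem_polyEdge j, hside _ ▸ ?_⟩
    nlinarith [mul_self_pos.mpr hc]

theorem IsSimplePolygon.exists_vertex_mem_polyEdge_mem_convexHull (hP : IsSimplePolygon p)
    (ha : a ∉ polyBody p) (hci : c ∈ polyEdge p i) (hc : c ∉ range p) (hvi : v ∈ polyEdge p i)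
    (hac : openSegment ℝ a c ∩ polyBody p = ∅) (hD : orient a c v ≠ 0) {s : ℝ} (hs : s ∈ Ioo 0 1)
    (hj : lineMap a v s ∈ polyEdge p j) (hs' : lineMap a v s ∉ range p)
    (hvis : openSegment ℝ a (lineMap a v s) ∩ polyBody p = ∅) :
    ∃ k, p k ∈ polyEdge p j ∧ p k ∈ convexHull ℝ {a, c, v} ∧ orient a v (p k) ≠ 0 := by
  set c' := lineMap a v s
  have hD2 : 0 < orient a c v * orient a c v := mul_self_pos.mpr hD
  have hc'a : orient a c c' = s * orient a c v := by rw [orient_lineMap]; simp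
  have hc'c : orient a c' v = 0 := by rw [orient_lineMap_mid]; simp
  have hc'v : orient c' c v = (1 - s) * orient a c v := by rw [orient_lineMap_left]; simp
  have hji : j ≠ i := by
    rintro rfl
    have := orient_eq_zero_of_mem_segment hj hci hvi
    rw [hc'v] at this
    exact mul_ne_zero (sub_ne_zero.mpr hs.2.ne') hD this
  obtain ⟨k, hwj, hw⟩ := hP.exists_vertex_mem_polyEdge_orient_pos hD hs.1 hj hs' hvis
  have hwv : orient a v (p k) ≠ 0 := by
    rw [orient_swap]; exact neg_ne_zero.mpr (left_ne_zero_of_mul hw.ne')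
  by_cases hin : 0 ≤ orient (p k) c v * orient a c v ∧ 0 ≤ orient a c (p k) * orient a c v
  · exact ⟨k, hwj, mem_convexHull_of_orient hD hin.1 hw.le hin.2, hwv⟩
  -- otherwise `[c', p k]` leaves the triangle `acv`, through `[a, c]` or `[c, v]`
  obtain ⟨t, ht, hf, hg, h₀⟩ := exists_mem_Ioo_zero_one_nonneg_and_eq_zero
    (f₀ := orient a c c' * orient a c v) (f₁ := orient a c (p k) * orient a c v)
    (g₀ := orient c' c v * orient a c v) (g₁ := orient (p k) c v * orient a c v)
    (by rw [hc'a, mul_assoc]; exact mul_pos hs.1 hD2)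
    (by rw [hc'v, mul_assoc]; exact mul_pos (sub_pos.mpr hs.2) hD2)
    (by rw [not_and_or, not_le, not_le] at hin; exact hin.symm)
  set z := lineMap c' (p k) t
  have hzj : z ∈ polyEdge p j := (convex_segment _ _).segment_subset hj hwj
    (lineMap_mem_segment ℝ _ _ ⟨ht.1.le, ht.2.le⟩)
  have hzv : orient a c z * orient a c v =
      (1 - t) * (orient a c c' * orient a c v) + t * (orient a c (p k) * orient a c v) := by
    rw [orient_lineMap]; ring
  have hza : orient z c v * orient a c v =
      (1 - t) * (orient c' c v * orient a c v) + t * (orient (p k) c v * orient a c v) := by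
    rw [orient_lineMap_left]; ring
  have hzc : 0 < orient a z v * orient a c v := by
    rw [orient_lineMap_mid, hc'c]; nlinarith [mul_pos ht.1 hw]
  obtain ⟨m, hm⟩ := hP.mem_range_of_orient_eq_zero ha hci hc hvi hac hD hji hzj (hza ▸ hg) hzc.le
    (hzv ▸ hf) (by
      rw [← hzv, ← hza] at h₀
      exact h₀.imp (fun h => (mul_eq_zero.mp h).resolve_right hD)
        (fun h => (mul_eq_zero.mp h).resolve_right hD))
  refine ⟨m, hm ▸ hzj, hm ▸ mem_convexHull_of_orient hD (hza ▸ hg) hzc.le (hzv ▸ hf), ?_⟩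
  rw [hm, orient_swap]
  exact neg_ne_zero.mpr (left_ne_zero_of_mul hzc.ne')

theorem IsSimplePolygon.exists_smaller_triangle (hP : IsSimplePolygon p) (ha : a ∉ polyBody p)
    {k : ZMod n} (hci : c ∈ polyEdge p i) (hc : c ∉ range p) (hki : p k ∈ polyEdge p i)
    (hac : openSegment ℝ a c ∩ polyBody p = ∅) (hD : orient a c (p k) ≠ 0)
    (hk : (openSegment ℝ a (p k) ∩ polyBody p).Nonempty) :
    (∃ m, p m ∈ convexHull ℝ {a, c, p k} ∧ openSegment ℝ a (p m) ∩ polyBody p = ∅) ∨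
    ∃ (c' : Plane) (j k' : ZMod n), c' ∈ polyEdge p j ∧ c' ∉ range p ∧ p k' ∈ polyEdge p j ∧
      openSegment ℝ a c' ∩ polyBody p = ∅ ∧ orient a c' (p k') ≠ 0 ∧
      convexHull ℝ {a, c', p k'} ⊆ convexHull ℝ {a, c, p k} ∧ p k ∉ convexHull ℝ {a, c', p k'} := by
  obtain ⟨c', ⟨hc'seg, hc'P⟩, hvis⟩ :=
    hP.isClosed_polyBody.exists_mem_segment_openSegment_inter_eq_empty ha
      (hk.mono (inter_subset_inter_left _ (openSegment_subset_segment ℝ _ _)))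
  have hc'T : c' ∈ convexHull ℝ {a, c, p k} :=
    segment_subset_convexHull (by simp) (by simp) hc'seg
  obtain ⟨j, hc'j⟩ := mem_iUnion.mp hc'P
  by_cases hc' : c' ∈ range p
  · obtain ⟨m, rfl⟩ := hc'
    exact Or.inl ⟨m, hc'T, hvis⟩
  have hc'open : c' ∈ openSegment ℝ a (p k) := mem_openSegment_of_ne_left_right
    (fun h => ha (h ▸ hc'P)) (fun h => hk.ne_empty (h ▸ hvis)) hc'seg
  rw [openSegment_eq_image_lineMap] at hc'open
  obtain ⟨s, hs, rfl⟩ := hc'open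
  obtain ⟨k', hk'j, hk'T, hk'⟩ :=
    hP.exists_vertex_mem_polyEdge_mem_convexHull ha hci hc hki hac hD hs hc'j hc' hvis
  refine Or.inr ⟨_, j, k', hc'j, hc', hk'j, hvis, ?_, ?_, notMem_convexHull_lineMap hs.1.le hs.2 ?_⟩
  · rw [orient_lineMap_mid]; simpa using ⟨hs.1.ne', hk'⟩
  · refine convexHull_min ?_ (convex_convexHull ℝ _)
    simp only [insert_subset_iff, singleton_subset_iff]
    exact ⟨subset_convexHull ℝ _ (by simp), hc'T, hk'T⟩
  · rwa [orient_swap, neg_ne_zero]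

end Visibility

theorem IsSimplePolygon.exists_visible_vertex_mem_convexHull {n : ℕ} {p : ZMod n → Plane}
    (hP : IsSimplePolygon p) {a c : Plane} {i k : ZMod n} (ha : a ∉ polyBody p)
    (hci : c ∈ polyEdge p i) (hc : c ∉ range p) (hki : p k ∈ polyEdge p i)
    (hac : openSegment ℝ a c ∩ polyBody p = ∅) (hD : orient a c (p k) ≠ 0) :
    ∃ m, p m ∈ convexHull ℝ {a, c, p k} ∧ openSegment ℝ a (p m) ∩ polyBody p = ∅ := by
  rcases (openSegment ℝ a (p k) ∩ polyBody p).eq_empty_or_nonempty with hk | hk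
  · exact ⟨k, subset_convexHull ℝ _ (by simp), hk⟩
  obtain h | ⟨c', j, k', hc'j, hc', hk'j, hac', hD', hsub, hk'⟩ :=
    hP.exists_smaller_triangle ha hci hc hki hac hD hk
  · exact h
  obtain ⟨m, hm, hvis⟩ := hP.exists_visible_vertex_mem_convexHull ha hc'j hc' hk'j hac' hD'
  exact ⟨m, hsub hm, hvis⟩
termination_by {m | p m ∈ convexHull ℝ {a, c, p k}}.ncard
decreasing_by
  have := hP.neZero
  exact ncard_lt_ncard ⟨fun m hm => hsub hm, fun h => hk' (h (subset_convexHull ℝ _ (by simp)))⟩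

theorem stmt7 {n : ℕ} (p : ZMod n → Plane) (hP : IsSimplePolygon p)
    (a : Plane) (ha : a ∉ polyBody p) :
    ∃ i j : ZMod n, p i ≠ p j ∧
      openSegment ℝ a (p i) ∩ polyBody p = ∅ ∧
      openSegment ℝ a (p j) ∩ polyBody p = ∅ := by
  obtain ⟨q, hqP, hq⟩ := hP.exists_mem_polyBody_forall_orient_ne_zero ha
  obtain ⟨c, ⟨hcq, hcP⟩, hac⟩ := hP.isClosed_polyBody.exists_mem_segment_openSegment_inter_eq_empty
    ha ⟨q, right_mem_segment ℝ a q, hqP⟩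
  have hgen : ∀ k, orient a c (p k) ≠ 0 := fun k h => hq k <| orient_eq_zero_trans
    (fun h => ha (h ▸ hcP)) (orient_eq_zero_of_mem_segment (left_mem_segment ℝ a q)
      (right_mem_segment ℝ a q) hcq) h
  obtain ⟨i, hci⟩ := mem_iUnion.mp hcP
  have hc : c ∉ range p := by rintro ⟨m, rfl⟩; exact hgen m (orient_self_right a _)
  obtain ⟨m₁, hm₁, hvis₁⟩ := hP.exists_visible_vertex_mem_convexHull ha hci hc
    (vertex_mem_polyEdge i) hac (hgen i)
  obtain ⟨m₂, hm₂, hvis₂⟩ := hP.exists_visible_vertex_mem_convexHull ha hci hc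
    (vertex_succ_mem_polyEdge i) hac (hgen (i + 1))
  refine ⟨m₁, m₂, fun h => ?_, hvis₁, hvis₂⟩
  have hopp := orient_mul_neg_of_mem_openSegment (mem_openSegment_of_mem_polyEdge hci hc)
    (orient_self_right a c) (hgen i)
  have h₁ := orient_mul_nonneg_of_mem_convexHull hm₁
  have h₂ := orient_mul_nonneg_of_mem_convexHull hm₂
  rw [h] at h₁
  nlinarith [mul_self_pos.mpr (hgen m₂), mul_nonneg h₁ h₂]
end

section
/- Let P be the boundary of a compact convex polygon in ℝ² with nonempty interior. Then the polygonal diameter of the exterior of P (the unbounded component of ℝ² \ P) equals 2: any two exterior points can be joined by a polygonal path of at most 2 segments within ext P, and there exist exterior points not joined by a single segment in ext P. -/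
/-!
Write `K` for the convex hull, so that `P = frontier K`. The complement of `P` is
`interior K ∪ Kᶜ`; the first piece is bounded and `Kᶜ` is connected and unbounded, so the
exterior of `P` is exactly `Kᶜ`.

Two points `a, b ∉ K` are joined through one corner `c`. Separate `a` and `b` from `K` by
functionals `f` and `g`, and go from `a` to `c = a + t • w` along a direction `w ≠ 0` with
`f w = 0` and `g w ≥ 0` (here the dimension is used), so that `[a, c]` stays in `{f > f a}`.
Fix a point `d = (1 - σ) • c + σ • b` of `[c, b]` with `σ < 1` so close to `1` that `g d`
exceeds the separating level of `g` for every `t ≥ 0`; then `[d, b]` misses `K`, and for `t`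
large both `c` and `d` lie beyond `K` in a direction `h` with `h w > 0`, so `[c, d]` misses `K`
too.
Finally, one segment does not suffice: every point of the bounded set `K` is the midpoint of two
points far away from it.
-/

open Set Metric

open Filter Module Bornology Topology

theorem segment_subset_segment_union_segment {𝕜 E : Type*} [Field 𝕜] [LinearOrder 𝕜]
    [IsStrictOrderedRing 𝕜] [AddCommGroup E] [Module 𝕜 E] {x y z : E}
    (hz : z ∈ segment 𝕜 x y) : segment 𝕜 x y ⊆ segment 𝕜 x z ∪ segment 𝕜 z y := by
  intro w hw
  rw [mem_segment_iff_wbtw] at hz hw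
  rw [mem_union, mem_segment_iff_wbtw, mem_segment_iff_wbtw]
  have hray : SameRay 𝕜 (w -ᵥ x) (z -ᵥ x) :=
    hw.sameRay_vsub_left.trans hz.sameRay_vsub_left.symm fun hyx => by
      rw [vsub_eq_zero_iff_eq.1 hyx, wbtw_self_iff] at hw
      simp [hw]
  rcases wbtw_total_of_sameRay_vsub_left hray with h | h
  · exact Or.inl h
  · exact Or.inr (hw.trans_left_right h)

section NormedSpace

variable {E : Type*} [NormedAddCommGroup E] [NormedSpace ℝ E]

theorem segment_subset_compl_of_forall_le (f : E →L[ℝ] ℝ) {u : ℝ} {K : Set E}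
    (hK : ∀ y ∈ K, f y ≤ u) {x y : E} (hx : u < f x) (hy : u < f y) :
    segment ℝ x y ⊆ Kᶜ := fun z hz hzK =>
  (hK z hzK).not_gt <| (convex_halfSpace_gt f.toLinearMap.isLinear u).segment_subset hx hy hz

theorem exists_ne_zero_apply_eq_zero_apply_nonneg [FiniteDimensional ℝ E]
    (hE : 1 < finrank ℝ E) (f g : E →L[ℝ] ℝ) : ∃ w ≠ 0, f w = 0 ∧ 0 ≤ g w := by
  have hker : LinearMap.ker f.toLinearMap ≠ ⊥ :=
    LinearMap.ker_ne_bot_of_finrank_lt (by rwa [finrank_self])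
  obtain ⟨w, hw, hw0⟩ := Submodule.exists_mem_ne_zero_of_ne_bot hker
  rcases le_total 0 (g w) with hg | hg
  · exact ⟨w, hw0, hw, hg⟩
  · exact ⟨-w, neg_ne_zero.2 hw0, by simpa using hw, by simpa using hg⟩

theorem Convex.exists_segments_subset_compl [FiniteDimensional ℝ E] (hE : 1 < finrank ℝ E)
    {K : Set E} (hKc : Convex ℝ K) (hK : IsCompact K) {a b : E} (ha : a ∉ K) (hb : b ∉ K) :
    ∃ c, segment ℝ a c ⊆ Kᶜ ∧ segment ℝ c b ⊆ Kᶜ := by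
  obtain ⟨f, u, hfK, hfa⟩ := geometric_hahn_banach_closed_point hKc hK.isClosed ha
  obtain ⟨g, v, hgK, hgb⟩ := geometric_hahn_banach_closed_point hKc hK.isClosed hb
  obtain ⟨w, hw0, hfw, hgw⟩ := exists_ne_zero_apply_eq_zero_apply_nonneg hE f g
  obtain ⟨h, -, hhw⟩ := exists_dual_vector ℝ w (norm_ne_zero_iff.2 hw0)
  obtain ⟨M, hM⟩ := (hK.image h.continuous).bddAbove
  have hhK : ∀ y ∈ K, h y ≤ M := fun y hy => hM (mem_image_of_mem h hy)
  obtain ⟨σ, hσ, hσ01⟩ : ∃ σ : ℝ, v < (1 - σ) * g a + σ * g b ∧ σ ∈ Ioo 0 1 := by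
    have hcont : Continuous fun σ : ℝ => (1 - σ) * g a + σ * g b := by fun_prop
    have hnear : ∀ᶠ σ in 𝓝[<] (1 : ℝ), v < (1 - σ) * g a + σ * g b :=
      nhdsWithin_le_nhds <| continuousAt_const.eventually_lt hcont.continuousAt (by simpa using hgb)
    exact (hnear.and (Ioo_mem_nhdsLT zero_lt_one)).exists
  have hhc : Tendsto (fun t : ℝ => h (a + t • w)) atTop atTop := by
    simp only [map_add, map_smul, smul_eq_mul, hhw]
    exact tendsto_atTop_add_const_left _ _ (tendsto_id.atTop_mul_const (norm_pos_iff.2 hw0))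
  have hhd : Tendsto (fun t : ℝ => (1 - σ) * h (a + t • w) + σ * h b) atTop atTop :=
    tendsto_atTop_add_const_right _ _ (hhc.const_mul_atTop (sub_pos.2 hσ01.2))
  obtain ⟨t, ht, htc, htd⟩ := ((eventually_ge_atTop 0).and
    ((hhc.eventually_gt_atTop M).and (hhd.eventually_gt_atTop M))).exists
  set c := a + t • w
  set d := (1 - σ) • c + σ • b
  have hd : d ∈ segment ℝ c b :=
    ⟨1 - σ, σ, by linarith [hσ01.2], hσ01.1.le, by ring, rfl⟩
  refine ⟨c, segment_subset_compl_of_forall_le f (fun y hy => (hfK y hy).le) hfa ?_,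
    (segment_subset_segment_union_segment hd).trans (union_subset ?_ ?_)⟩
  · simpa [c, hfw] using hfa
  · exact segment_subset_compl_of_forall_le h hhK htc (by simpa [d] using htd)
  · refine segment_subset_compl_of_forall_le g (fun y hy => (hgK y hy).le) ?_ hgb
    have : 0 ≤ (1 - σ) * (t * g w) := mul_nonneg (by linarith [hσ01.2]) (mul_nonneg ht hgw)
    simp only [d, c, map_add, map_smul, smul_eq_mul]
    linarith

theorem Bornology.IsBounded.exists_notMem_mem_segment [Nontrivial E] {K : Set E}
    (hK : IsBounded K) (x : E) : ∃ a ∉ K, ∃ b ∉ K, x ∈ segment ℝ a b := by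
  obtain ⟨R, hR, hKR⟩ := hK.subset_ball_lt 0 x
  obtain ⟨v, hv⟩ := exists_norm_eq E hR.le
  have hfar : ∀ y, dist y x = R → y ∉ K := fun y hy hyK => (hKR hyK).ne hy
  refine ⟨x + v, hfar _ (by simp [hv]), x - v, hfar _ (by simp [hv]),
    ⟨1 / 2, 1 / 2, by norm_num, by norm_num, by norm_num, by module⟩⟩

end NormedSpace

theorem extP_frontier_eq_compl {K : Set Plane} (hKc : Convex ℝ K) (hK : IsCompact K) :
    extP (frontier K) = Kᶜ := by
  ext x
  constructor
  · rintro ⟨hxP, hunb⟩ hxK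
    have hxint : x ∈ interior K := self_sdiff_frontier K ▸ ⟨hxK, hxP⟩
    have hsplit : (frontier K)ᶜ ⊆ interior K ∪ Kᶜ := fun z hz => by
      by_cases hzK : z ∈ K
      · exact Or.inl (self_sdiff_frontier K ▸ ⟨hzK, hz⟩)
      · exact Or.inr hzK
    refine hunb (hK.isBounded.subset (Subset.trans ?_ interior_subset))
    exact isPreconnected_connectedComponentIn.subset_left_of_subset_union isOpen_interior
      hK.isClosed.isOpen_compl (disjoint_compl_right.mono_left interior_subset)
      ((connectedComponentIn_subset _ _).trans hsplit) ⟨x, mem_connectedComponentIn hxP, hxint⟩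
  · intro hx
    have hKP : Kᶜ ⊆ (frontier K)ᶜ := compl_subset_compl.2 hK.isClosed.frontier_subset
    have hconn : IsPathConnected Kᶜ := isPathConnected_iff.2 ⟨⟨x, hx⟩, fun a ha b hb => by
      obtain ⟨c, hac, hcb⟩ := hKc.exists_segments_subset_compl (by simp) hK ha hb
      exact (JoinedIn.of_segment_subset hac).trans (JoinedIn.of_segment_subset hcb)⟩
    refine ⟨hKP hx, fun hB => NormedSpace.unbounded_univ ℝ Plane ?_⟩
    rw [← union_compl_self K]
    exact hK.isBounded.union
      (hB.subset (hconn.isConnected.isPreconnected.subset_connectedComponentIn hx hKP))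

theorem PolyPath.two_of_segment_subset {S : Set Plane} {a b c : Plane}
    (hac : segment ℝ a c ⊆ S) (hcb : segment ℝ c b ⊆ S) : PolyPath S a b 2 :=
  ⟨![a, c, b], rfl, rfl, fun i => by fin_cases i <;> simpa⟩

theorem stmt12_general {n : ℕ} (p : ZMod n → Plane) (hP : IsSimplePolygon p)
    (hfr : polyBody p = frontier (convexHull ℝ (Set.range p))) :
    (∀ a ∈ extP (polyBody p), ∀ b ∈ extP (polyBody p),
      ∃ k ≤ 2, PolyPath (extP (polyBody p)) a b k) ∧
    ∃ a ∈ extP (polyBody p), ∃ b ∈ extP (polyBody p),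
      ¬ segment ℝ a b ⊆ extP (polyBody p) := by
  have : NeZero n := ⟨by have := hP.three_le; omega⟩
  have hK : IsCompact (convexHull ℝ (range p)) := (finite_range p).isCompact_convexHull ℝ
  have hKc : Convex ℝ (convexHull ℝ (range p)) := convex_convexHull ℝ _
  rw [hfr, extP_frontier_eq_compl hKc hK]
  refine ⟨fun a ha b hb => ?_, ?_⟩
  · obtain ⟨c, hac, hcb⟩ := hKc.exists_segments_subset_compl (by simp) hK ha hb
    exact ⟨2, le_rfl, .two_of_segment_subset hac hcb⟩
  · obtain ⟨a, ha, b, hb, hab⟩ := hK.isBounded.exists_notMem_mem_segment (p 0)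
    exact ⟨a, ha, b, hb, fun h => h hab (subset_convexHull ℝ _ (mem_range_self 0))⟩

theorem stmt12 {n : ℕ} (p : ZMod n → Plane) (hP : IsSimplePolygon p)
    (hKi : (interior (convexHull ℝ (Set.range p))).Nonempty)
    (hfr : polyBody p = frontier (convexHull ℝ (Set.range p))) :
    (∀ a ∈ extP (polyBody p), ∀ b ∈ extP (polyBody p),
      ∃ k ≤ 2, PolyPath (extP (polyBody p)) a b k) ∧
    ∃ a ∈ extP (polyBody p), ∃ b ∈ extP (polyBody p),
      ¬ segment ℝ a b ⊆ extP (polyBody p) :=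
  stmt12_general p hP hfr
end

section
/- Let P be a non-convex simple closed quadrilateral (4-gon) in ℝ². Then the polygonal diameter of the exterior of P is at most 2; in fact ext P is the union of three convex open sets, each two of which have a point in common. -/
/-!
Let `r = p i` be the vertex inside the triangle `a b c` of the other three, in cyclic order
`r, a, b, c`. In barycentric coordinates of `a b c`, the exterior of the polygon is the union of
the open half-planes beyond the edges `ab` and `bc` and of the open angle at `r` between the rays
from `r` through `a` and through `c`. Each of these three convex sets contains, with every point
`x`, the ray from `r` through `x` beyond `x`, so it lies in an unbounded component. Their union
`W` is open, misses the polygon, has bounded complement (inside the triangle), and its frontier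
lies on the polygon; so the complement of the polygon splits into the open sets `W` and
`(closure W)ᶜ`, and every component meeting the latter is bounded. Any two of the three pieces
meet, which gives two-segment paths through a common point.
-/

open Set Metric

namespace AffineBasis

variable {ι E : Type*} [Fintype ι] [AddCommGroup E] [Module ℝ E]

theorem mem_segment_of_coord_eq_mul (B : AffineBasis ι ℝ E) {i : ι} {r x : E} {t : ℝ}
    (ht : t ∈ Icc 0 1) (h : ∀ j ≠ i, B.coord j x = t * B.coord j r) :
    x ∈ segment ℝ (B i) r := by
  classical
  rw [segment_eq_image_lineMap]
  refine ⟨t, ht, B.ext_elem fun j => ?_⟩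
  rw [AffineMap.apply_lineMap, AffineMap.lineMap_apply_ring]
  rcases eq_or_ne j i with rfl | hj
  · have hsum := B.sum_coord_apply_eq_one x
    have hsumr := B.sum_coord_apply_eq_one r
    rw [← Finset.add_sum_erase _ _ (Finset.mem_univ j)] at hsum hsumr
    rw [Finset.sum_congr rfl fun k hk => h k (Finset.ne_of_mem_erase hk), ← Finset.mul_sum]
      at hsum
    rw [coord_apply_eq]
    linear_combination t * hsumr - hsum
  · rw [coord_apply_ne _ hj, h j hj]
    ring

theorem mem_segment_of_coord_eq_zero (B : AffineBasis ι ℝ E) {i j : ι} (hij : i ≠ j) {x : E}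
    (hj : 0 ≤ B.coord j x) (hi : 0 ≤ B.coord i x)
    (h : ∀ k, k ≠ i ∧ k ≠ j → B.coord k x = 0) : x ∈ segment ℝ (B i) (B j) := by
  have hsum := B.sum_coord_apply_eq_one x
  rw [Fintype.sum_eq_add i j hij h] at hsum
  refine B.mem_segment_of_coord_eq_mul ⟨hj, by linarith⟩ fun k hk => ?_
  rcases eq_or_ne k j with rfl | hkj
  · rw [coord_apply_eq, mul_one]
  · rw [coord_apply_ne _ hkj, mul_zero, h k ⟨hk, hkj⟩]

theorem exists_coord_eq (B : AffineBasis ι ℝ E) {w : ι → ℝ} (hw : ∑ i, w i = 1) :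
    ∃ x, ∀ i, B.coord i x = w i :=
  ⟨Finset.univ.affineCombination ℝ B w, fun _ =>
    B.coord_apply_combination_of_mem (Finset.mem_univ _) hw⟩

end AffineBasis

theorem AffineMap.lineMap_mem_preimage_Iio {E : Type*} [AddCommGroup E] [Module ℝ E]
    (g : E →ᵃ[ℝ] ℝ) {r x : E} {t : ℝ} (hr : 0 ≤ g r) (hx : x ∈ g ⁻¹' Iio 0) (ht : 1 ≤ t) :
    lineMap r x t ∈ g ⁻¹' Iio 0 := by
  simp only [mem_preimage, mem_Iio, AffineMap.apply_lineMap, AffineMap.lineMap_apply_ring'] at hx ⊢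
  nlinarith

theorem not_isBounded_of_lineMap_mem {E : Type*} [NormedAddCommGroup E] [NormedSpace ℝ E]
    {s : Set E} {r x : E} (hrx : r ≠ x)
    (h : ∀ t : ℝ, 1 ≤ t → AffineMap.lineMap r x t ∈ s) : ¬ Bornology.IsBounded s := by
  intro hs
  obtain ⟨C, hC⟩ := (isBounded_iff_subset_closedBall r).mp hs
  have hd : 0 < dist r x := dist_pos.mpr hrx
  set t := max 1 ((C + 1) / dist r x)
  have hball := hC (h t (le_max_left _ _))
  rw [mem_closedBall, dist_comm, dist_left_lineMap, Real.norm_eq_abs,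
    abs_of_pos (lt_of_lt_of_le one_pos (le_max_left _ _))] at hball
  have : (C + 1) / dist r x * dist r x ≤ t * dist r x :=
    mul_le_mul_of_nonneg_right (le_max_right _ _) hd.le
  rw [div_mul_cancel₀ _ hd.ne'] at this
  linarith

theorem polyPath_two_of_pairwise_inter_nonempty {𝒦 : Set (Set Plane)}
    (hconv : ∀ K ∈ 𝒦, Convex ℝ K) (hmeet : 𝒦.Pairwise fun K L => (K ∩ L).Nonempty)
    {a b : Plane} (ha : a ∈ ⋃₀ 𝒦) (hb : b ∈ ⋃₀ 𝒦) : PolyPath (⋃₀ 𝒦) a b 2 := by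
  obtain ⟨K, hK, haK⟩ := ha
  obtain ⟨L, hL, hbL⟩ := hb
  obtain ⟨m, hmK, hmL⟩ : (K ∩ L).Nonempty := by
    rcases eq_or_ne K L with rfl | hKL
    exacts [⟨a, haK, haK⟩, hmeet hK hL hKL]
  refine ⟨![a, m, b], rfl, rfl, fun i => ?_⟩
  fin_cases i
  · simpa using ((hconv K hK).segment_subset haK hmK).trans (subset_sUnion_of_mem hK)
  · simpa using ((hconv L hL).segment_subset hmL hbL).trans (subset_sUnion_of_mem hL)

theorem extP_eq_of_frontier_subset {P W : Set Plane} (hW : IsOpen W) (hWP : Disjoint W P)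
    (hfront : frontier W ⊆ P) (hbdd : Bornology.IsBounded Wᶜ)
    (hunb : ∀ x ∈ W, ¬ Bornology.IsBounded (connectedComponentIn W x)) : extP P = W := by
  ext x
  constructor
  · rintro ⟨hxP, hxunb⟩
    by_contra hxW
    have hcover : Pᶜ ⊆ W ∪ (closure W)ᶜ := fun y hyP => by
      by_contra hy
      rw [mem_union, mem_compl_iff, not_or, not_not] at hy
      exact hyP (hfront (hW.frontier_eq ▸ ⟨hy.2, hy.1⟩))
    have hxcl : x ∉ closure W := fun hx => hxP (hfront (hW.frontier_eq ▸ ⟨hx, hxW⟩))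
    have hcomp : connectedComponentIn Pᶜ x ⊆ (closure W)ᶜ :=
      isPreconnected_connectedComponentIn.subset_right_of_subset_union hW
        isClosed_closure.isOpen_compl (disjoint_compl_right.mono_right
          (compl_subset_compl.mpr subset_closure))
        ((connectedComponentIn_subset _ _).trans hcover)
        ⟨x, mem_connectedComponentIn hxP, hxcl⟩
    exact hxunb (hbdd.subset (hcomp.trans (compl_subset_compl.mpr subset_closure)))
  · intro hxW
    exact ⟨hWP.notMem_of_mem_left hxW, fun hb =>
      hunb x hxW (hb.subset (connectedComponentIn_mono _ hWP.subset_compl_right))⟩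

section ReflexQuadrilateral

variable (B : AffineBasis (Fin 3) ℝ Plane) (r : Plane)

def quadBody : Set Plane :=
  segment ℝ r (B 0) ∪ segment ℝ (B 0) (B 1) ∪ segment ℝ (B 1) (B 2) ∪ segment ℝ (B 2) r

/-- Vanishes at `r` and at the vertex of `B` other than `B j` and `B k`, so its zero set is the
line through these two points. -/
noncomputable def crossForm (j k : Fin 3) : Plane →ᵃ[ℝ] ℝ :=
  B.coord k r • B.coord j - B.coord j r • B.coord k

/-- The open angle at `r` between the rays from `r` through `B 0` and through `B 2`. -/
def notch : Set Plane := crossForm B r 1 2 ⁻¹' Iio 0 ∩ crossForm B r 1 0 ⁻¹' Iio 0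

def quadExterior : Set Plane := B.coord 2 ⁻¹' Iio 0 ∪ B.coord 0 ⁻¹' Iio 0 ∪ notch B r

@[simp]
theorem crossForm_apply (j k : Fin 3) (x : Plane) :
    crossForm B r j k x = B.coord k r * B.coord j x - B.coord j r * B.coord k x := by
  simp [crossForm]

theorem crossForm_reindex (e : Fin 3 ≃ Fin 3) (j k : Fin 3) :
    crossForm (B.reindex e) r j k = crossForm B r (e.symm j) (e.symm k) := by
  ext x
  simp [AffineBasis.coord_reindex]

variable {B r}

@[simp]
theorem crossForm_apply_self (j k : Fin 3) : crossForm B r j k r = 0 := by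
  rw [crossForm_apply, mul_comm, sub_self]

theorem mem_segment_zero_of_crossForm_eq_zero (hr : 0 < B.coord 1 r) {x : Plane}
    (hx : crossForm B r 1 2 x = 0) (hx1 : 0 ≤ B.coord 1 x) (hx0 : crossForm B r 1 0 x ≤ 0) :
    x ∈ segment ℝ (B 0) r := by
  have hsumx := B.sum_coord_apply_eq_one x
  have hsumr := B.sum_coord_apply_eq_one r
  rw [Fin.sum_univ_three] at hsumx hsumr
  rw [crossForm_apply] at hx hx0
  refine B.mem_segment_of_coord_eq_mul ⟨div_nonneg hx1 hr.le, (div_le_one hr).mpr ?_⟩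
    fun j hj => ?_
  · nlinarith
  · obtain rfl | rfl : j = 1 ∨ j = 2 := by fin_cases j <;> simp_all
    · field_simp
    · field_simp
      linarith

theorem mem_segment_two_of_crossForm_eq_zero (hr : 0 < B.coord 1 r) {x : Plane}
    (hx : crossForm B r 1 0 x = 0) (hx1 : 0 ≤ B.coord 1 x) (hx2 : crossForm B r 1 2 x ≤ 0) :
    x ∈ segment ℝ (B 2) r := by
  have h := mem_segment_zero_of_crossForm_eq_zero (B := B.reindex (Equiv.swap 0 2)) (r := r)
  have h1 : Equiv.swap (0 : Fin 3) 2 1 = 1 := Equiv.swap_apply_of_ne_of_ne (by decide) (by decide)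
  simp only [crossForm_reindex, AffineBasis.coord_reindex, AffineBasis.reindex_apply,
    Equiv.symm_swap, Equiv.swap_apply_left, Equiv.swap_apply_right, h1] at h
  exact h hr hx hx1 hx2

theorem mem_quadExterior {x : Plane} : x ∈ quadExterior B r ↔
    B.coord 2 x < 0 ∨ B.coord 0 x < 0 ∨ (crossForm B r 1 2 x < 0 ∧ crossForm B r 1 0 x < 0) := by
  simp only [quadExterior, notch, mem_union, mem_inter_iff, mem_preimage, mem_Iio, or_assoc]

theorem quadBody_subset_compl_quadExterior (hr : ∀ j, 0 < B.coord j r) :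
    quadBody B r ⊆ (quadExterior B r)ᶜ := by
  set K : (Plane →ᵃ[ℝ] ℝ) → Set Plane := fun g =>
    B.coord 0 ⁻¹' Ici 0 ∩ B.coord 2 ⁻¹' Ici 0 ∩ g ⁻¹' Ici 0
  have hK : ∀ g, Convex ℝ (K g) := fun g =>
    (((convex_Ici 0).affine_preimage _).inter ((convex_Ici 0).affine_preimage _)).inter
      ((convex_Ici 0).affine_preimage _)
  have hKW : K (crossForm B r 1 2) ∪ K (crossForm B r 1 0) ⊆ (quadExterior B r)ᶜ := by
    rintro x (⟨⟨h0, h2⟩, hg⟩ | ⟨⟨h0, h2⟩, hg⟩) hx <;>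
      simp only [mem_preimage, mem_Ici] at h0 h2 hg <;>
      rcases mem_quadExterior.mp hx with h | h | ⟨h, h'⟩ <;> linarith
  have hmem : ∀ g y, y ∈ K g ↔ 0 ≤ B.coord 0 y ∧ 0 ≤ B.coord 2 y ∧ 0 ≤ g y :=
    fun g y => by simp [K, and_assoc]
  have hr' := fun j => (hr j).le
  simp only [quadBody, union_subset_iff]
  refine ⟨⟨⟨?_, ?_⟩, ?_⟩, ?_⟩
  · refine ((hK _).segment_subset ?_ ?_).trans (subset_union_left.trans hKW) <;>
      simp [hmem, hr', mul_comm]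
  · refine ((hK _).segment_subset ?_ ?_).trans (subset_union_left.trans hKW) <;>
      simp [hmem, hr', mul_comm]
  · refine ((hK _).segment_subset ?_ ?_).trans (subset_union_right.trans hKW) <;>
      simp [hmem, hr', mul_comm]
  · refine ((hK _).segment_subset ?_ ?_).trans (subset_union_right.trans hKW) <;>
      simp [hmem, hr', mul_comm]

theorem isOpen_notch : IsOpen (notch B r) :=
  (isOpen_Iio.preimage (AffineMap.continuous_of_finiteDimensional _)).inter
    (isOpen_Iio.preimage (AffineMap.continuous_of_finiteDimensional _))

theorem convex_notch : Convex ℝ (notch B r) :=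
  ((convex_Iio 0).affine_preimage _).inter ((convex_Iio 0).affine_preimage _)

theorem isOpen_quadExterior : IsOpen (quadExterior B r) :=
  ((isOpen_Iio.preimage (B.coord 2).continuous_of_finiteDimensional).union
    (isOpen_Iio.preimage (B.coord 0).continuous_of_finiteDimensional)).union isOpen_notch

theorem compl_quadExterior_subset_convexHull (hr : ∀ j, 0 < B.coord j r) :
    (quadExterior B r)ᶜ ⊆ convexHull ℝ (range B) := by
  intro x hx
  rw [mem_compl_iff, mem_quadExterior, not_or, not_or, not_and_or, not_lt, not_lt, not_lt,
    not_lt] at hx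
  obtain ⟨h2, h0, h⟩ := hx
  have h1 : 0 ≤ B.coord 1 x := by
    by_contra! h1
    simp only [crossForm_apply] at h
    rcases h with h | h
    · linarith [mul_neg_of_pos_of_neg (hr 2) h1, mul_nonneg (hr 1).le h2]
    · linarith [mul_neg_of_pos_of_neg (hr 0) h1, mul_nonneg (hr 1).le h0]
  rw [B.convexHull_eq_nonneg_coord]
  intro j
  fin_cases j <;> assumption

theorem closure_quadExterior_subset : closure (quadExterior B r) ⊆
    B.coord 2 ⁻¹' Iic 0 ∪ B.coord 0 ⁻¹' Iic 0 ∪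
      (crossForm B r 1 2 ⁻¹' Iic 0 ∩ crossForm B r 1 0 ⁻¹' Iic 0) := by
  refine closure_minimal (union_subset_union (union_subset_union ?_ ?_)
    (inter_subset_inter ?_ ?_)) ?_
  any_goals exact preimage_mono Iio_subset_Iic_self
  exact ((isClosed_Iic.preimage (AffineMap.continuous_of_finiteDimensional _)).union
    (isClosed_Iic.preimage (AffineMap.continuous_of_finiteDimensional _))).union
    ((isClosed_Iic.preimage (AffineMap.continuous_of_finiteDimensional _)).inter
    (isClosed_Iic.preimage (AffineMap.continuous_of_finiteDimensional _)))

theorem frontier_quadExterior_subset (hr : ∀ j, 0 < B.coord j r) :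
    frontier (quadExterior B r) ⊆ quadBody B r := by
  rw [isOpen_quadExterior.frontier_eq]
  rintro x ⟨hxcl, hxW⟩
  replace hxcl := closure_quadExterior_subset hxcl
  have hT := compl_quadExterior_subset_convexHull hr hxW
  rw [B.convexHull_eq_nonneg_coord] at hT
  simp only [mem_quadExterior, not_or, not_and_or, not_lt] at hxW
  simp only [mem_union, mem_inter_iff, mem_preimage, mem_Iic] at hxcl
  simp only [quadBody, mem_union]
  rcases hxcl with (h2 | h0) | ⟨h12, h10⟩
  · refine Or.inl (Or.inl (Or.inr (B.mem_segment_of_coord_eq_zero (by decide) (hT 1) (hT 0)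
      fun k hk => ?_)))
    obtain rfl : k = 2 := by fin_cases k <;> simp_all
    exact le_antisymm h2 (hT 2)
  · refine Or.inl (Or.inr ?_)
    rw [segment_symm]
    refine B.mem_segment_of_coord_eq_zero (by decide) (hT 1) (hT 2) fun k hk => ?_
    obtain rfl : k = 0 := by fin_cases k <;> simp_all
    exact le_antisymm h0 (hT 0)
  · rcases h12.eq_or_lt with h12 | h12
    · exact Or.inl (Or.inl (Or.inl (segment_symm ℝ r (B 0) ▸
        mem_segment_zero_of_crossForm_eq_zero (hr 1) h12 (hT 1) h10)))
    · refine Or.inr (mem_segment_two_of_crossForm_eq_zero (hr 1) ?_ (hT 1) h12.le)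
      exact le_antisymm h10 (hxW.2.2.resolve_left (not_le.mpr h12))

theorem not_isBounded_connectedComponentIn_quadExterior (hr : ∀ j, 0 < B.coord j r) {x : Plane}
    (hx : x ∈ quadExterior B r) :
    ¬ Bornology.IsBounded (connectedComponentIn (quadExterior B r) x) := by
  have hrx : r ≠ x := by
    rintro rfl
    rcases mem_quadExterior.mp hx with h | h | ⟨h, -⟩
    · exact (hr 2).not_gt h
    · exact (hr 0).not_gt h
    · exact (crossForm_apply_self (B := B) 1 2).not_lt h
  have key : ∀ S ⊆ quadExterior B r, Convex ℝ S → x ∈ S →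
      (∀ t : ℝ, 1 ≤ t → AffineMap.lineMap r x t ∈ S) →
      ¬ Bornology.IsBounded (connectedComponentIn (quadExterior B r) x) :=
    fun S hSW hS hxS hray hb => not_isBounded_of_lineMap_mem hrx hray
      (hb.subset (hS.isPreconnected.subset_connectedComponentIn hxS hSW))
  rcases hx with (h | h) | h
  · exact key _ (subset_union_left.trans subset_union_left) ((convex_Iio 0).affine_preimage _) h
      fun t ht => (B.coord 2).lineMap_mem_preimage_Iio (hr 2).le h ht
  · exact key _ (subset_union_right.trans subset_union_left) ((convex_Iio 0).affine_preimage _) h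
      fun t ht => (B.coord 0).lineMap_mem_preimage_Iio (hr 0).le h ht
  · exact key _ subset_union_right convex_notch h fun t ht =>
      ⟨AffineMap.lineMap_mem_preimage_Iio _ (crossForm_apply_self 1 2).ge h.1 ht,
        AffineMap.lineMap_mem_preimage_Iio _ (crossForm_apply_self 1 0).ge h.2 ht⟩

theorem extP_quadBody (hr : ∀ j, 0 < B.coord j r) : extP (quadBody B r) = quadExterior B r :=
  extP_eq_of_frontier_subset isOpen_quadExterior
    (disjoint_right.mpr fun _ hx => quadBody_subset_compl_quadExterior hr hx)
    (frontier_quadExterior_subset hr)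
    (((finite_range B).isCompact_convexHull ℝ).isBounded.subset
      (compl_quadExterior_subset_convexHull hr))
    fun _ => not_isBounded_connectedComponentIn_quadExterior hr

theorem inter_coord_two_neg_coord_zero_neg_nonempty :
    (B.coord 2 ⁻¹' Iio 0 ∩ B.coord 0 ⁻¹' Iio 0).Nonempty := by
  obtain ⟨x, hx⟩ := B.exists_coord_eq (w := ![-1, 3, -1])
    (by simp [Fin.sum_univ_three]; norm_num)
  exact ⟨x, by simp [hx], by simp [hx]⟩

theorem inter_coord_two_neg_notch_nonempty (hr : ∀ j, 0 < B.coord j r) :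
    (B.coord 2 ⁻¹' Iio 0 ∩ notch B r).Nonempty := by
  obtain ⟨x, hx⟩ := B.exists_coord_eq
    (w := ![1 + 2 * B.coord 1 r + B.coord 2 r, -2 * B.coord 1 r, -B.coord 2 r])
    (by simp [Fin.sum_univ_three]; ring)
  refine ⟨x, ?_, ?_, ?_⟩ <;> simp [hx] <;> nlinarith [hr 0, hr 1, hr 2]

theorem inter_coord_zero_neg_notch_nonempty (hr : ∀ j, 0 < B.coord j r) :
    (B.coord 0 ⁻¹' Iio 0 ∩ notch B r).Nonempty := by
  obtain ⟨x, hx⟩ := B.exists_coord_eq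
    (w := ![-B.coord 0 r, -2 * B.coord 1 r, 1 + B.coord 0 r + 2 * B.coord 1 r])
    (by simp [Fin.sum_univ_three]; ring)
  refine ⟨x, ?_, ?_, ?_⟩ <;> simp [hx] <;> nlinarith [hr 0, hr 1, hr 2]

end ReflexQuadrilateral

theorem exists_affineBasis_of_mem_interior_convexHull {a b c r : Plane}
    (h : r ∈ interior (convexHull ℝ {a, b, c})) :
    ∃ B : AffineBasis (Fin 3) ℝ Plane, ⇑B = ![a, b, c] ∧ ∀ j, 0 < B.coord j r := by
  have hrange : range ![a, b, c] = {a, b, c} := by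
    rw [Matrix.range_cons, Matrix.range_cons_cons_empty, singleton_union]
  rw [← hrange] at h
  have hspan : affineSpan ℝ (range ![a, b, c]) = ⊤ :=
    interior_convexHull_nonempty_iff_affineSpan_eq_top.mp ⟨r, h⟩
  have hind : AffineIndependent ℝ ![a, b, c] := by
    rw [affineIndependent_iff_le_finrank_vectorSpan ℝ _ (by simp : Fintype.card (Fin 3) = 2 + 1),
      AffineSubspace.vectorSpan_eq_top_of_affineSpan_eq_top ℝ _ _ hspan]
    simp
  let B : AffineBasis (Fin 3) ℝ Plane := ⟨_, hind, hspan⟩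
  change r ∈ interior (convexHull ℝ (range B)) at h
  exact ⟨B, rfl, by rwa [B.interior_convexHull] at h⟩

theorem polyBody_eq_quadBody (p : ZMod 4 → Plane) (i : ZMod 4) {B : AffineBasis (Fin 3) ℝ Plane}
    (hB : ⇑B = ![p (i + 1), p (i + 2), p (i + 3)]) : polyBody p = quadBody B (p i) := by
  have hcycle : ∀ k j : ZMod 4, j = k ∨ j = k + 1 ∨ j = k + 2 ∨ j = k + 3 := by decide
  have hquad : quadBody B (p i) =
      polyEdge p i ∪ polyEdge p (i + 1) ∪ polyEdge p (i + 2) ∪ polyEdge p (i + 3) := by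
    have h2 : i + 1 + 1 = i + 2 := by ring
    have h3 : i + 2 + 1 = i + 3 := by ring
    have h4 : i + 3 + 1 = i := by rw [add_assoc, show (3 + 1 : ZMod 4) = 0 from rfl, add_zero]
    simp only [quadBody, polyEdge, hB, h2, h3, h4, Matrix.cons_val_zero, Matrix.cons_val_one,
      Matrix.cons_val_two, Matrix.head_cons, Matrix.tail_cons]
  rw [hquad]
  ext x
  simp only [polyBody, mem_iUnion, mem_union]
  constructor
  · rintro ⟨j, hj⟩
    rcases hcycle i j with rfl | rfl | rfl | rfl <;> simp only [hj, or_true, true_or]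
  · rintro (((h | h) | h) | h) <;> exact ⟨_, h⟩

theorem stmt13_general (p : ZMod 4 → Plane)
    (hnc : ∃ i : ZMod 4, p i ∈ interior (convexHull ℝ {p (i + 1), p (i + 2), p (i + 3)})) :
    (∀ a ∈ extP (polyBody p), ∀ b ∈ extP (polyBody p),
      ∃ k ≤ 2, PolyPath (extP (polyBody p)) a b k) ∧
    ∃ A B C : Set Plane, IsOpen A ∧ IsOpen B ∧ IsOpen C ∧
      Convex ℝ A ∧ Convex ℝ B ∧ Convex ℝ C ∧
      extP (polyBody p) = A ∪ B ∪ C ∧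
      (A ∩ B).Nonempty ∧ (A ∩ C).Nonempty ∧ (B ∩ C).Nonempty := by
  obtain ⟨i, hi⟩ := hnc
  obtain ⟨T, hT, hr⟩ := exists_affineBasis_of_mem_interior_convexHull hi
  have hopen : ∀ j, IsOpen (T.coord j ⁻¹' Iio 0) := fun j =>
    isOpen_Iio.preimage (T.coord j).continuous_of_finiteDimensional
  have hconv : ∀ j, Convex ℝ (T.coord j ⁻¹' Iio 0) := fun j => (convex_Iio 0).affine_preimage _
  have hAB := inter_coord_two_neg_coord_zero_neg_nonempty (B := T)
  have hAC := inter_coord_two_neg_notch_nonempty hr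
  have hBC := inter_coord_zero_neg_notch_nonempty hr
  have hext :
      extP (polyBody p) = ⋃₀ {T.coord 2 ⁻¹' Iio 0, T.coord 0 ⁻¹' Iio 0, notch T (p i)} := by
    rw [polyBody_eq_quadBody p i hT, extP_quadBody hr, quadExterior]
    simp only [sUnion_insert, sUnion_singleton, union_assoc]
  refine ⟨fun a ha b hb => ⟨2, le_rfl, ?_⟩, _, _, _, hopen 2, hopen 0, isOpen_notch, hconv 2,
    hconv 0, convex_notch, ?_, hAB, hAC, hBC⟩
  · rw [hext] at ha hb ⊢
    refine polyPath_two_of_pairwise_inter_nonempty ?_ ?_ ha hb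
    · rintro K (rfl | rfl | rfl)
      exacts [hconv 2, hconv 0, convex_notch]
    · simp [Set.pairwise_insert, inter_comm (notch T (p i)),
        inter_comm (T.coord 0 ⁻¹' Iio 0) (T.coord 2 ⁻¹' Iio 0), hAB, hAC, hBC]
  · rw [hext, sUnion_insert, sUnion_insert, sUnion_singleton, union_assoc]

theorem stmt13 (p : ZMod 4 → Plane) (hP : IsSimplePolygon p)
    (hnc : ∃ i : ZMod 4, p i ∈ interior (convexHull ℝ {p (i + 1), p (i + 2), p (i + 3)})) :
    (∀ a ∈ extP (polyBody p), ∀ b ∈ extP (polyBody p),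
      ∃ k ≤ 2, PolyPath (extP (polyBody p)) a b k) ∧
    ∃ A B C : Set Plane, IsOpen A ∧ IsOpen B ∧ IsOpen C ∧
      Convex ℝ A ∧ Convex ℝ B ∧ Convex ℝ C ∧
      extP (polyBody p) = A ∪ B ∪ C ∧
      (A ∩ B).Nonempty ∧ (A ∩ C).Nonempty ∧ (B ∩ C).Nonempty :=
  stmt13_general p hnc
end

section
/- Let P be a simple closed polygon in ℝ² and let a, b ∈ ext P be points such that there are rays R_a = {a + λu : λ ≥ 0} and R_b = {b + λw : λ ≥ 0} missing P with u and w linearly independent. Then π_{ext P}(a,b) ≤ 3, i.e., a and b can be joined by a polygonal path of at most 3 segments lying in ext P. -/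
open Set Metric

theorem stmt15 {n : ℕ} (p : ZMod n → Plane) (hP : IsSimplePolygon p)
    (a b u w : Plane)
    (ha : a ∈ extP (polyBody p)) (hb : b ∈ extP (polyBody p))
    (hu : ∀ l : ℝ, 0 ≤ l → a + l • u ∉ polyBody p)
    (hw : ∀ l : ℝ, 0 ≤ l → b + l • w ∉ polyBody p)
    (hind : LinearIndependent ℝ ![u, w]) :
    ∃ k ≤ 3, PolyPath (extP (polyBody p)) a b k := by
  classical
  set P := polyBody p with hPdef
  haveI : NeZero n := ⟨by have := hP.three_le; omega⟩
  have hPc : IsCompact P := by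
    apply isCompact_iUnion
    intro i
    rw [polyEdge, segment_eq_image]
    exact isCompact_Icc.image (by continuity)
  obtain ⟨r, hr0, hrP⟩ := hPc.isBounded.subset_closedBall_lt 0 0
  have hcont : Continuous (fun s : ℝ => ‖(1 - s) • u + s • w‖) := by continuity
  obtain ⟨s₀, hs₀I, hmin⟩ := isCompact_Icc.exists_isMinOn
    (⟨0, by norm_num⟩ : (Icc (0:ℝ) 1).Nonempty) hcont.continuousOn
  set c := ‖(1 - s₀) • u + s₀ • w‖ with hc
  have hc0 : 0 < c := by
    have hne : (1 - s₀) • u + s₀ • w ≠ 0 := by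
      intro h
      obtain ⟨h1, h2⟩ := LinearIndependent.pair_iff.1 hind _ _ h
      rw [h2] at h1; norm_num at h1
    exact norm_pos_iff.mpr hne
  set M := max ‖a‖ ‖b‖ with hM
  have hM0 : (0:ℝ) ≤ M := le_trans (norm_nonneg a) (le_max_left _ _)
  set t := (r + M + 1) / c with ht
  have ht0 : 0 ≤ t := div_nonneg (by linarith) hc0.le
  have htc : r + M < t * c := by
    rw [ht, div_mul_cancel₀ _ hc0.ne']; linarith
  have haM : ‖a‖ ≤ M := le_max_left _ _
  have hbM : ‖b‖ ≤ M := le_max_right _ _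
  -- the three segments avoid P
  have h1 : segment ℝ a (a + t • u) ⊆ Pᶜ := by
    rw [segment_eq_image]
    rintro _ ⟨θ, hθ, rfl⟩
    beta_reduce
    have he : (1 - θ) • a + θ • (a + t • u) = a + (θ * t) • u := by module
    rw [he]
    exact hu _ (mul_nonneg hθ.1 ht0)
  have h3 : segment ℝ (b + t • w) b ⊆ Pᶜ := by
    rw [segment_eq_image]
    rintro _ ⟨θ, hθ, rfl⟩
    beta_reduce
    have he : (1 - θ) • (b + t • w) + θ • b = b + ((1 - θ) * t) • w := by module
    rw [he]
    exact hw _ (mul_nonneg (by linarith [hθ.2]) ht0)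
  have h2 : segment ℝ (a + t • u) (b + t • w) ⊆ Pᶜ := by
    rw [segment_eq_image]
    rintro _ ⟨θ, hθ, rfl⟩
    beta_reduce
    intro hzP
    set z := (1 - θ) • (a + t • u) + θ • (b + t • w) with hz
    set q := (1 - θ) • a + θ • b with hq
    set v := (1 - θ) • u + θ • w with hv
    have hqM : ‖q‖ ≤ M := by
      calc ‖q‖ ≤ ‖(1 - θ) • a‖ + ‖θ • b‖ := norm_add_le _ _
        _ = (1 - θ) * ‖a‖ + θ * ‖b‖ := by
            rw [norm_smul, norm_smul, Real.norm_of_nonneg (by linarith [hθ.2]),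
              Real.norm_of_nonneg hθ.1]
        _ ≤ (1 - θ) * M + θ * M := by
            have h2' := hθ.2
            have h1' := hθ.1
            nlinarith
        _ = M := by ring
    have hcv : c ≤ ‖v‖ := hmin ⟨hθ.1, hθ.2⟩
    have hzv : z - q = t • v := by rw [hz, hq, hv]; module
    have hzr : ‖z‖ ≤ r := by
      have := hrP hzP
      rwa [mem_closedBall, dist_zero_right] at this
    have : t * c ≤ r + M := by
      calc t * c ≤ t * ‖v‖ := by nlinarith
        _ = ‖t • v‖ := by rw [norm_smul, Real.norm_of_nonneg ht0]
        _ = ‖z - q‖ := by rw [hzv]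
        _ ≤ ‖z‖ + ‖q‖ := norm_sub_le _ _
        _ ≤ r + M := add_le_add hzr hqM
    linarith
  set T := segment ℝ a (a + t • u) ∪ segment ℝ (a + t • u) (b + t • w)
      ∪ segment ℝ (b + t • w) b with hT
  have hTP : T ⊆ Pᶜ := union_subset (union_subset h1 h2) h3
  have hTconn : IsPreconnected T := by
    apply IsPreconnected.union (b + t • w)
    · exact Or.inr (right_mem_segment ℝ _ _)
    · exact left_mem_segment ℝ _ _
    · exact IsPreconnected.union (a + t • u) (right_mem_segment ℝ _ _)
        (left_mem_segment ℝ _ _) (convex_segment _ _).isPreconnected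
        (convex_segment _ _).isPreconnected
    · exact (convex_segment _ _).isPreconnected
  have haT : a ∈ T := Or.inl (Or.inl (left_mem_segment ℝ _ _))
  have hsub : T ⊆ connectedComponentIn Pᶜ a :=
    hTconn.subset_connectedComponentIn haT hTP
  have hext : ∀ x ∈ T, x ∈ extP P := by
    intro x hx
    refine ⟨hTP hx, ?_⟩
    rw [← connectedComponentIn_eq (hsub hx)]
    exact ha.2
  refine ⟨3, le_refl 3, ![a, a + t • u, b + t • w, b], rfl, rfl, ?_⟩
  intro i
  fin_cases i
  · intro x hx
    exact hext x (Or.inl (Or.inl hx))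
  · intro x hx
    exact hext x (Or.inl (Or.inr hx))
  · intro x hx
    exact hext x (Or.inr hx)
end
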